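/- arXiv:1208.1182 — 8 statements merged into one kernel-verified Lean document; each statement's English description precedes it below -/
import Mathlib

section
/- For every topological space X, c(X) ≤ μ(X); equivalently, if X is κ-favorable for an infinite cardinal κ, then every family of pairwise disjoint nonempty open subsets of X has cardinality at most κ. -/
open Cardinal Set Topology TopologicalSpace

universe u

/-- A strategy for Player I in the open-open game of length `κ` on `X`: to each
position `i < κ` and each partial play (a transfinite sequence of length `< κ`,
namely the sets chosen by Player II at earlier positions) it assigns a set. -/
def GameStrategy (X : Type u) (κ : Cardinal.{u}) : Type u :=
  (i : κ.ord.ToType) → ({j : κ.ord.ToType // j < i} → Set X) → Set X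

/-- `s` is a winning strategy for Player I in the open-open game of length `κ` on `X`:
it assigns to every transfinite sequence of length `< κ` of nonempty open subsets of `X`
a nonempty open subset of `X`, and for every transfinite sequence `(B_α)_{α<κ}` of
nonempty open sets with `B_α ⊆ s((B_γ)_{γ<α})` for all `α < κ`, the union
`⋃_{α<κ} B_α` is dense in `X`. -/
def IsWinningStrategy (X : Type u) [TopologicalSpace X] (κ : Cardinal.{u})
    (s : GameStrategy X κ) : Prop :=
  (∀ (i : κ.ord.ToType) (f : {j : κ.ord.ToType // j < i} → Set X),
      (∀ j, IsOpen (f j) ∧ (f j).Nonempty) → IsOpen (s i f) ∧ (s i f).Nonempty) ∧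
  (∀ B : κ.ord.ToType → Set X,
      (∀ i, (IsOpen (B i) ∧ (B i).Nonempty) ∧ B i ⊆ s i (fun j => B j.1)) →
      Dense (⋃ i, B i))

/-- `X` is `κ`-favorable: Player I has a winning strategy in the open-open game of
length `κ` on `X`. -/
def IsFavorable (X : Type u) [TopologicalSpace X] (κ : Cardinal.{u}) : Prop :=
  ∃ s : GameStrategy X κ, IsWinningStrategy X κ s

/-- `μ(X)`: the least infinite cardinal `κ` such that `X` is `κ`-favorable. -/
noncomputable def mu (X : Type u) [TopologicalSpace X] : Cardinal.{u} :=
  sInf {κ : Cardinal.{u} | ℵ₀ ≤ κ ∧ IsFavorable X κ}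

/-- The cellularity `c(X)`: the supremum of the cardinalities of families of pairwise
disjoint nonempty open subsets of `X`. -/
noncomputable def cellularity (X : Type u) [TopologicalSpace X] : Cardinal.{u} :=
  ⨆ U : {U : Set (Set X) // (∀ V ∈ U, IsOpen V ∧ V.Nonempty) ∧ U.PairwiseDisjoint id},
    #U.1

/-- A `π`-base for `X`: a family of nonempty open sets such that every nonempty open
set contains a member of the family. -/
def IsPiBase (X : Type u) [TopologicalSpace X] (B : Set (Set X)) : Prop :=
  (∀ V ∈ B, IsOpen V ∧ V.Nonempty) ∧
  (∀ U : Set X, IsOpen U → U.Nonempty → ∃ V ∈ B, V ⊆ U)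

/-- `π(X)`: the least cardinality of a `π`-base for `X`. -/
noncomputable def piWeight (X : Type u) [TopologicalSpace X] : Cardinal.{u} :=
  sInf {c : Cardinal.{u} | ∃ B : Set (Set X), IsPiBase X B ∧ #B = c}

/-- `Sat(X)`: the least cardinal `κ` such that every family of pairwise disjoint
nonempty open subsets of `X` has cardinality `< κ`. -/
noncomputable def satNumber (X : Type u) [TopologicalSpace X] : Cardinal.{u} :=
  sInf {κ : Cardinal.{u} | ∀ U : Set (Set X),
    (∀ V ∈ U, IsOpen V ∧ V.Nonempty) → U.PairwiseDisjoint id → #U < κ}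

/-- A skeletal map: a continuous surjection such that the closure of the image of every
nonempty open set has nonempty interior. -/
def Skeletal {X : Type u} {Y : Type u} [TopologicalSpace X] [TopologicalSpace Y]
    (f : X → Y) : Prop :=
  Continuous f ∧ Function.Surjective f ∧
    ∀ U : Set X, IsOpen U → U.Nonempty → (interior (closure (f '' U))).Nonempty

/-- An inverse system of topological spaces over a preordered indexing set: spaces
`obj σ` and continuous surjective bonding maps `map : obj σ → obj ρ` for `ρ ≤ σ`,
compatible with identities and composition. -/
structure InvSys (I : Type u) [Preorder I] : Type (u + 1) where
  obj : I → Type u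
  topo : ∀ σ, TopologicalSpace (obj σ)
  map : ∀ {ρ σ : I}, ρ ≤ σ → obj σ → obj ρ
  map_id : ∀ (σ : I) (x : obj σ), map (le_refl σ) x = x
  map_comp : ∀ {ρ σ τ : I} (h₁ : ρ ≤ σ) (h₂ : σ ≤ τ) (x : obj τ),
    map h₁ (map h₂ x) = map (h₁.trans h₂) x
  map_cont : ∀ {ρ σ : I} (h : ρ ≤ σ), Continuous[topo σ, topo ρ] (map h)
  map_surj : ∀ {ρ σ : I} (h : ρ ≤ σ), Function.Surjective (map h)

/-- The inverse limit of an inverse system: the subspace of the product consisting of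
all threads. -/
def InvSys.Limit {I : Type u} [Preorder I] (D : InvSys I) : Type u :=
  {x : ∀ σ, D.obj σ // ∀ (ρ σ : I) (h : ρ ≤ σ), D.map h (x σ) = x ρ}

/-- The limit carries the subspace topology of the product topology. -/
instance InvSys.instTopLimit {I : Type u} [Preorder I] (D : InvSys I) :
    TopologicalSpace D.Limit :=
  TopologicalSpace.induced Subtype.val (@Pi.topologicalSpace _ _ D.topo)

/-- The inverse limit of the subsystem of an inverse system determined by a subset `A`
of the indexing set. -/
def InvSys.chainLimit {I : Type u} [Preorder I] (D : InvSys I) (A : Set I) : Type u :=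
  {x : ∀ a : A, D.obj a // ∀ (a b : A) (h : (a : I) ≤ b), D.map h (x b) = x a}

instance InvSys.instTopChainLimit {I : Type u} [Preorder I] (D : InvSys I) (A : Set I) :
    TopologicalSpace (D.chainLimit A) :=
  TopologicalSpace.induced Subtype.val (@Pi.topologicalSpace _ _ fun a : A => D.topo a)

/-- The canonical map from `obj σ`, for `σ` an upper bound of `A`, to the limit of the
subsystem over `A`. -/
def InvSys.toChainLimit {I : Type u} [Preorder I] (D : InvSys I) (A : Set I) (σ : I)
    (h : ∀ a ∈ A, a ≤ σ) : D.obj σ → D.chainLimit A :=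
  fun x => ⟨fun a => D.map (h a a.2) x, fun _ b hab => D.map_comp hab (h b b.2) x⟩

/-- `κ`-completeness of an inverse system: every chain of cardinality at most `κ` in the
indexing set has a least upper bound, and for every such chain with least upper bound
`σ`, the canonical map from `obj σ` to the limit of the subsystem over the chain is a
homeomorphism. -/
def InvSys.IsComplete {I : Type u} [Preorder I] (D : InvSys I) (κ : Cardinal.{u}) : Prop :=
  (∀ A : Set I, IsChain (· ≤ ·) A → #A ≤ κ → ∃ σ : I, IsLUB A σ) ∧
  (∀ A : Set I, IsChain (· ≤ ·) A → #A ≤ κ → ∀ σ : I, ∀ hσ : IsLUB A σ,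
    @IsHomeomorph _ _ (D.topo σ) (D.instTopChainLimit A)
      (D.toChainLimit A σ fun _ ha => hσ.1 ha))

/-- The weight of a topological space (with explicitly given topology): the least
cardinality of a base of the topology. -/
noncomputable def tweight (X : Type u) (t : TopologicalSpace X) : Cardinal.{u} :=
  sInf {c : Cardinal.{u} | ∃ B : Set (Set X),
    @TopologicalSpace.IsTopologicalBasis X t B ∧ #B = c}

/-- The class `C_κ`: spaces homeomorphic to the inverse limit of a `κ`-complete inverse
system over a directed poset, with all spaces `T₀` of weight at most `κ` and all bonding
maps skeletal. -/
def MemClassC (X : Type u) [TopologicalSpace X] (κ : Cardinal.{u}) : Prop :=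
  ∃ (I : Type u) (_ : PartialOrder I), IsDirected I (· ≤ ·) ∧
    ∃ D : InvSys I, D.IsComplete κ ∧
      (∀ σ : I, @T0Space (D.obj σ) (D.topo σ)) ∧
      (∀ σ : I, tweight (D.obj σ) (D.topo σ) ≤ κ) ∧
      (∀ (ρ σ : I) (h : ρ ≤ σ), @Skeletal _ _ (D.topo σ) (D.topo ρ) (D.map h)) ∧
      Nonempty (X ≃ₜ D.Limit)

/-!
Let `U` be a disjoint family of nonempty open sets and `s` a `κ`-winning strategy. Player II
answers each move `W` of `s` by `W ∩ V` if `W` meets some `V ∈ U` (such `V` is unique), and by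
`W` otherwise. The union of the resulting play is dense, so every `V ∈ U` meets, hence
contains, one of the `κ` answers, and disjointness makes this choice of position injective.
For `c(X) ≤ μ(X)` it remains to see that `μ(X)` is attained when `X ≠ ∅`: Player I wins the
game of any length `κ ≥ #{nonempty open sets}` by enumerating all nonempty open sets.
-/

theorem Set.PairwiseDisjoint.exists_subset_forall_subset_of_inter_nonempty {X : Type u}
    [TopologicalSpace X] {U : Set (Set X)} (hdisj : U.PairwiseDisjoint id)
    (hU : ∀ V ∈ U, IsOpen V) (W : Set X) :
    ∃ W' ⊆ W, (IsOpen W → IsOpen W') ∧ (W.Nonempty → W'.Nonempty) ∧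
      ∀ V ∈ U, (W' ∩ V).Nonempty → W' ⊆ V := by
  by_cases hmeet : ∃ V ∈ U, (W ∩ V).Nonempty
  · obtain ⟨V, hVU, hWV⟩ := hmeet
    refine ⟨W ∩ V, inter_subset_left, fun hW => hW.inter (hU V hVU), fun _ => hWV, ?_⟩
    rintro V' hV'U ⟨x, ⟨-, hxV⟩, hxV'⟩
    obtain rfl : V = V' := hdisj.elim hVU hV'U (not_disjoint_iff.2 ⟨x, hxV, hxV'⟩)
    exact inter_subset_right
  · exact ⟨W, subset_rfl, id, id, fun V hV hWV => (hmeet ⟨V, hV, hWV⟩).elim⟩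

namespace GameStrategy

variable {X : Type u} {κ : Cardinal.{u}}

noncomputable def play (s : GameStrategy X κ) (r : Set X → Set X) : κ.ord.ToType → Set X :=
  IsWellFounded.fix (· < ·) fun i B => r (s i fun j => B j.1 j.2)

theorem play_eq (s : GameStrategy X κ) (r : Set X → Set X) (i : κ.ord.ToType) :
    s.play r i = r (s i fun j => s.play r j.1) :=
  IsWellFounded.fix_eq _ _ i

variable [TopologicalSpace X] {s : GameStrategy X κ} {r : Set X → Set X}

theorem isOpen_play_and_nonempty (hs : IsWinningStrategy X κ s)
    (hro : ∀ W, IsOpen W → IsOpen (r W)) (hrne : ∀ W : Set X, W.Nonempty → (r W).Nonempty)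
    (i : κ.ord.ToType) : IsOpen (s.play r i) ∧ (s.play r i).Nonempty := by
  induction i using WellFoundedLT.induction with
  | _ i ih =>
    obtain ⟨hso, hsne⟩ := hs.1 i _ fun j => ih j.1 j.2
    rw [play_eq]
    exact ⟨hro _ hso, hrne _ hsne⟩

theorem dense_iUnion_play (hs : IsWinningStrategy X κ s) (hrW : ∀ W, r W ⊆ W)
    (hro : ∀ W, IsOpen W → IsOpen (r W)) (hrne : ∀ W : Set X, W.Nonempty → (r W).Nonempty) :
    Dense (⋃ i, s.play r i) :=
  hs.2 _ fun i => ⟨isOpen_play_and_nonempty hs hro hrne i, (play_eq s r i).trans_subset (hrW _)⟩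

end GameStrategy

theorem IsFavorable.mk_le {X : Type u} [TopologicalSpace X] {κ : Cardinal.{u}}
    (hfav : IsFavorable X κ) {U : Set (Set X)} (hU : ∀ V ∈ U, IsOpen V ∧ V.Nonempty)
    (hdisj : U.PairwiseDisjoint id) : #U ≤ κ := by
  obtain ⟨s, hs⟩ := hfav
  choose r hrW hro hrne hrcell using
    hdisj.exists_subset_forall_subset_of_inter_nonempty fun V hV => (hU V hV).1
  have hcell : ∀ V : U, ∃ i, s.play r i ⊆ V := by
    rintro ⟨V, hV⟩
    obtain ⟨x, hxV, hxB⟩ := (GameStrategy.dense_iUnion_play hs hrW hro hrne).inter_open_nonempty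
      V (hU V hV).1 (hU V hV).2
    obtain ⟨i, hxi⟩ := mem_iUnion.1 hxB
    rw [GameStrategy.play_eq] at hxi
    exact ⟨i, (GameStrategy.play_eq s r i).trans_subset (hrcell _ V hV ⟨x, hxi, hxV⟩)⟩
  choose f hf using hcell
  have hf_inj : Function.Injective f := by
    intro V V' hVV'
    obtain ⟨x, hx⟩ := (GameStrategy.isOpen_play_and_nonempty hs hro hrne (f V)).2
    exact Subtype.ext <| hdisj.elim V.2 V'.2 <|
      not_disjoint_iff.2 ⟨x, hf V hx, hf V' (hVV' ▸ hx)⟩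
  simpa using Cardinal.mk_le_of_injective hf_inj

theorem isFavorable_of_mk_le {X : Type u} [TopologicalSpace X] [Nonempty X]
    {κ : Cardinal.{u}} (hκ : #{V : Set X // IsOpen V ∧ V.Nonempty} ≤ κ) :
    IsFavorable X κ := by
  have : Nonempty {V : Set X // IsOpen V ∧ V.Nonempty} := ⟨⟨univ, isOpen_univ, univ_nonempty⟩⟩
  obtain ⟨e, he⟩ : ∃ e : κ.ord.ToType → {V : Set X // IsOpen V ∧ V.Nonempty},
      Function.Surjective e := by
    obtain ⟨g⟩ := Cardinal.le_def _ _ |>.1 (hκ.trans_eq (Cardinal.mk_ord_toType κ).symm)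
    exact ⟨Function.invFun g, Function.invFun_surjective g.injective⟩
  refine ⟨fun i _ => e i, fun i _ _ => (e i).2, fun B hB => dense_iff_inter_open.2 ?_⟩
  intro W hWo hWne
  obtain ⟨i, hi⟩ := he ⟨W, hWo, hWne⟩
  obtain ⟨x, hx⟩ := (hB i).1.2
  have hxW : x ∈ (e i : Set X) := (hB i).2 hx
  exact ⟨x, by rwa [hi] at hxW, mem_iUnion.2 ⟨i, hx⟩⟩

theorem isFavorable_mu (X : Type u) [TopologicalSpace X] [Nonempty X] :
    IsFavorable X (mu X) :=
  (csInf_mem (s := {κ : Cardinal.{u} | ℵ₀ ≤ κ ∧ IsFavorable X κ})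
    ⟨_, le_max_left _ _, isFavorable_of_mk_le (le_max_right ℵ₀ _)⟩).2

/-- `c(X) ≤ μ(X)`; equivalently, if `X` is `κ`-favorable for an infinite
cardinal `κ`, then every family of pairwise disjoint nonempty open subsets of `X` has
cardinality at most `κ`. -/
theorem cellularity_le_mu (X : Type u) [TopologicalSpace X] :
    cellularity X ≤ mu X ∧
    ∀ κ : Cardinal.{u}, ℵ₀ ≤ κ → IsFavorable X κ →
      ∀ U : Set (Set X), (∀ V ∈ U, IsOpen V ∧ V.Nonempty) →
        U.PairwiseDisjoint id → #U ≤ κ := by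
  refine ⟨ciSup_le' fun ⟨U, hU, hdisj⟩ => ?_, fun κ _ hfav U hU hdisj => hfav.mk_le hU hdisj⟩
  rcases U.eq_empty_or_nonempty with rfl | ⟨V, hV⟩
  · simp
  · have : Nonempty X := (hU V hV).2.to_subtype.map Subtype.val
    exact (isFavorable_mu X).mk_le hU hdisj
end

section
/- For every infinite cardinal κ, the Cantor cube {0,1}^κ (the product of κ copies of the two-point discrete space) is ω-favorable; hence μ({0,1}^κ) = ω. -/
open Cardinal Set Topology TopologicalSpace

universe u

/-!
Player I plays basic clopen sets. At stage `n = ⟨a, b⟩` he fixes, by the `b`-th of its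
finitely many patterns, the finite set `S` of coordinates of the basic sets chosen inside
Player II's first `a` moves. Given a basic set `V` with coordinates `G`, take `a` so large
that `S` contains every coordinate of `G` used by any of these basic sets, and `b` so that
the pattern agrees with `V` on `S`. The basic set inside Player II's answer at stage
`⟨a, b⟩` then agrees with `V` on all their common coordinates, so it meets `V`.
-/

noncomputable def orderIsoAleph0OrdToType : ℕ ≃o Cardinal.aleph0.{u}.ord.ToType :=
  (StrictMono.orderIsoOfSurjective
    (fun k : ℕ => (⟨(k : Ordinal.{u}), by simp [Ordinal.natCast_lt_omega0]⟩ :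
      Set.Iio Cardinal.aleph0.{u}.ord))
    (fun _ _ h => Subtype.mk_lt_mk.mpr (Nat.cast_lt.mpr h))
    (fun x => by
      obtain ⟨k, hk⟩ := Ordinal.lt_omega0.mp (x.2.trans_le ord_aleph0.le)
      exact ⟨k, Subtype.ext hk.symm⟩)).trans Ordinal.ToType.mk

theorem isFavorable_aleph0_of_nat {X : Type u} [TopologicalSpace X]
    (σ : ℕ → (ℕ → Set X) → Set X)
    (hlocal : ∀ n B B', (∀ m < n, B m = B' m) → σ n B = σ n B')
    (hσ : ∀ n B, IsOpen (σ n B) ∧ (σ n B).Nonempty)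
    (hwin : ∀ B : ℕ → Set X, (∀ n, IsOpen (B n) ∧ (B n).Nonempty ∧ B n ⊆ σ n B) →
      Dense (⋃ n, B n)) :
    IsFavorable X ℵ₀ := by
  let e := orderIsoAleph0OrdToType.{u}
  refine ⟨fun i f => σ (e.symm i) fun m => if h : e m < i then f ⟨e m, h⟩ else ∅,
    fun i f _ => hσ _ _, fun B hB => ?_⟩
  have hmove : ∀ n, σ n (B ∘ e) = σ n fun m => if e m < e n then B (e m) else ∅ :=
    fun n => hlocal _ _ _ fun m hm => by simp [e.lt_iff_lt.2 hm]
  have hdense : Dense (⋃ n, B (e n)) := hwin (B ∘ e) fun n => by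
    simpa [hmove, and_assoc] using hB (e n)
  rwa [e.surjective.iUnion_comp B] at hdense

theorem mu_eq_aleph0_of_isFavorable {X : Type u} [TopologicalSpace X]
    (h : IsFavorable X ℵ₀) : mu X = ℵ₀ :=
  le_antisymm (csInf_le' ⟨le_rfl, h⟩) (le_csInf ⟨ℵ₀, le_rfl, h⟩ fun _ hκ => hκ.1)

theorem Finset.exists_forall_mem_biUnion_range {α : Type*} [DecidableEq α] (f : ℕ → Finset α)
    (G : Finset α) : ∃ a, ∀ i ∈ G, (∃ m, i ∈ f m) → i ∈ (range a).biUnion f := by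
  classical
  let g : α → ℕ := fun i => if h : ∃ m, i ∈ f m then h.choose else 0
  obtain ⟨a, ha⟩ := Finset.exists_nat_subset_range (G.image g)
  refine ⟨a, fun i hi hex => Finset.mem_biUnion.2 ⟨g i, ha (mem_image_of_mem g hi), ?_⟩⟩
  simpa only [g, dif_pos hex] using hex.choose_spec

namespace CantorCube

variable {ι : Type*}

def cyl (F : Finset ι) (x : ι → Bool) : Set (ι → Bool) := {y | ∀ i ∈ F, y i = x i}

theorem mem_cyl_self (F : Finset ι) (x : ι → Bool) : x ∈ cyl F x := fun _ _ => rfl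

theorem isOpen_cyl (F : Finset ι) (x : ι → Bool) : IsOpen (cyl F x) := by
  have : cyl F x = (F : Set ι).pi fun i => {x i} := by ext; simp [cyl]
  exact this ▸ isOpen_set_pi F.finite_toSet fun _ _ => isOpen_discrete _

theorem exists_cyl_subset {U : Set (ι → Bool)} (hU : IsOpen U) {x : ι → Bool} (hx : x ∈ U) :
    ∃ F, cyl F x ⊆ U := by
  obtain ⟨F, u, hu, hFU⟩ := isOpen_pi_iff.1 hU x hx
  exact ⟨F, fun y hy => hFU fun i hi => (hy i hi).symm ▸ (hu i hi).2⟩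

theorem cyl_inter_cyl_nonempty {F G : Finset ι} {x z : ι → Bool}
    (h : ∀ i ∈ F, i ∈ G → x i = z i) : (cyl F x ∩ cyl G z).Nonempty := by
  classical
  refine ⟨fun i => if i ∈ F then x i else z i, fun i hi => if_pos hi, fun i hi => ?_⟩
  by_cases hiF : i ∈ F
  · simp [hiF, h i hiF hi]
  · simp [hiF]

theorem exists_support : ∃ supp : Set (ι → Bool) → Finset ι,
    ∀ U, IsOpen U → U.Nonempty → ∃ x, cyl (supp U) x ⊆ U := by
  refine Classical.skolem.1 fun U : Set (ι → Bool) =>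
    (?_ : ∃ F : Finset ι, IsOpen U → U.Nonempty → ∃ x, cyl F x ⊆ U)
  by_cases hU : IsOpen U ∧ U.Nonempty
  · obtain ⟨x, hx⟩ := hU.2
    obtain ⟨F, hF⟩ := exists_cyl_subset hU.1 hx
    exact ⟨F, fun _ _ => ⟨x, hF⟩⟩
  · exact ⟨∅, fun h₁ h₂ => (hU ⟨h₁, h₂⟩).elim⟩

theorem exists_enum (S : Finset ι) :
    ∃ e : ℕ → ι → Bool, ∀ z : ι → Bool, ∃ b, ∀ i ∈ S, e b i = z i := by
  classical
  obtain ⟨f, hf⟩ := exists_surjective_nat (S → Bool)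
  refine ⟨fun b i => if h : i ∈ S then f b ⟨i, h⟩ else false, fun z => ?_⟩
  obtain ⟨b, hb⟩ := hf fun i => z i
  exact ⟨b, fun i hi => by simp [hi, hb]⟩

/-- Junk unless `U` is open and nonempty. -/
noncomputable def support (U : Set (ι → Bool)) : Finset ι := exists_support.choose U

theorem exists_cyl_support_subset {U : Set (ι → Bool)} (hU : IsOpen U) (hne : U.Nonempty) :
    ∃ x, cyl (support U) x ⊆ U :=
  exists_support.choose_spec U hU hne

noncomputable def enum (S : Finset ι) : ℕ → ι → Bool := (exists_enum S).choose

theorem exists_enum_eq (S : Finset ι) (z : ι → Bool) : ∃ b, ∀ i ∈ S, enum S b i = z i :=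
  (exists_enum S).choose_spec z

section

variable [DecidableEq ι]

noncomputable def natStrategy (n : ℕ) (B : ℕ → Set (ι → Bool)) : Set (ι → Bool) :=
  let S := (Finset.range n.unpair.1).biUnion fun m => support (B m)
  cyl S (enum S n.unpair.2)

theorem natStrategy_congr {n : ℕ} {B B' : ℕ → Set (ι → Bool)} (h : ∀ m < n, B m = B' m) :
    natStrategy n B = natStrategy n B' := by
  have hS : ((Finset.range n.unpair.1).biUnion fun m => support (B m)) =
      (Finset.range n.unpair.1).biUnion fun m => support (B' m) :=
    Finset.biUnion_congr rfl fun m hm => by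
      simp only [h m ((Finset.mem_range.1 hm).trans_le n.unpair_left_le)]
  simp only [natStrategy, hS]

theorem dense_iUnion_of_subset_natStrategy (B : ℕ → Set (ι → Bool))
    (hB : ∀ n, IsOpen (B n) ∧ (B n).Nonempty ∧ B n ⊆ natStrategy n B) :
    Dense (⋃ n, B n) := by
  refine dense_iff_inter_open.2 fun U hU ⟨z, hz⟩ => ?_
  obtain ⟨G, hG⟩ := exists_cyl_subset hU hz
  obtain ⟨a, ha⟩ := Finset.exists_forall_mem_biUnion_range (fun m => support (B m)) G
  set S := (Finset.range a).biUnion fun m => support (B m)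
  obtain ⟨b, hb⟩ := exists_enum_eq S z
  set n := Nat.pair a b
  obtain ⟨hBo, hBne, hBs⟩ := hB n
  have hBn : B n ⊆ cyl S (enum S b) := by simpa [natStrategy, n, S] using hBs
  obtain ⟨x, hx⟩ := exists_cyl_support_subset hBo hBne
  have hxz : ∀ i ∈ support (B n), i ∈ G → x i = z i := fun i hiF hiG => by
    have hiS := ha i hiG ⟨n, hiF⟩
    rw [hBn (hx (mem_cyl_self _ x)) i hiS, hb i hiS]
  obtain ⟨y, hyB, hyG⟩ := cyl_inter_cyl_nonempty hxz
  exact ⟨y, hG hyG, mem_iUnion.2 ⟨n, hx hyB⟩⟩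

end

end CantorCube

open CantorCube in
theorem isFavorable_aleph0_cantorCube (ι : Type u) : IsFavorable (ι → Bool) ℵ₀ := by
  classical
  exact isFavorable_aleph0_of_nat natStrategy (fun _ _ _ => natStrategy_congr)
    (fun _ _ => ⟨isOpen_cyl _ _, ⟨_, mem_cyl_self _ _⟩⟩) dense_iUnion_of_subset_natStrategy

theorem cantorCube_omega_favorable_general (κ : Cardinal.{u}) :
    IsFavorable (κ.ord.ToType → Bool) ℵ₀ ∧ mu (κ.ord.ToType → Bool) = ℵ₀ :=
  have h := isFavorable_aleph0_cantorCube κ.ord.ToType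
  ⟨h, mu_eq_aleph0_of_isFavorable h⟩

/-- For every infinite cardinal `κ`, the Cantor cube `{0,1}^κ` is
`ω`-favorable; hence `μ({0,1}^κ) = ω`. -/
theorem cantorCube_omega_favorable (κ : Cardinal.{u}) (hκ : ℵ₀ ≤ κ) :
    IsFavorable (κ.ord.ToType → Bool) ℵ₀ ∧ mu (κ.ord.ToType → Bool) = ℵ₀ :=
  cantorCube_omega_favorable_general κ
end

section
/- If f : X → Y is a skeletal map of topological spaces and X is κ-favorable for an infinite cardinal κ, then Y is κ-favorable. -/
open Cardinal Set Topology TopologicalSpace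

universe u

/-! A winning strategy for `X` is transported to `Y` by playing the two games side by side.
Each move `B` of the opponent in `Y` is answered in `X` by `f⁻¹' B ∩ S`, where `S` is the
answer of the strategy for `X`, and in `Y` by the interior of the closure of `f '' S`, which is
nonempty because `f` is skeletal. Since `B` is an open set meeting `closure (f '' S)`, the set
`f⁻¹' B ∩ S` is nonempty, so the play in `X` is legal; its union is dense, and its image, a
subset of the union of the play in `Y`, is dense because `f` is a continuous surjection. -/

theorem preimage_inter_nonempty_of_subset_closure_image {X Y : Type*} [TopologicalSpace Y]
    {f : X → Y} {S : Set X} {V : Set Y} (hV : IsOpen V) (hne : V.Nonempty)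
    (hsub : V ⊆ closure (f '' S)) : (f ⁻¹' V ∩ S).Nonempty := by
  have := (closure_inter_open_nonempty_iff hV).1 (hne.mono fun y hy => ⟨hsub hy, hy⟩)
  rwa [image_inter_nonempty_iff, inter_comm] at this

namespace GameStrategy

variable {X Y : Type u} [TopologicalSpace X] {κ : Cardinal.{u}}

/-- Where `f⁻¹' B i ∩ S` is not a legal move, the answer `S` of `s` itself is played, so that
the play in `X` always follows `s`. -/
noncomputable def pullbackPlay (s : GameStrategy X κ) (f : X → Y) (B : κ.ord.ToType → Set Y)
    (i : κ.ord.ToType) : Set X :=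
  let S := s i fun j => pullbackPlay s f B j.1
  open Classical in
  if IsOpen (f ⁻¹' B i ∩ S) ∧ (f ⁻¹' B i ∩ S).Nonempty then f ⁻¹' B i ∩ S else S
termination_by i
decreasing_by exact j.2

variable (s : GameStrategy X κ) (f : X → Y)

theorem pullbackPlay_eq (B : κ.ord.ToType → Set Y) (i : κ.ord.ToType) :
    s.pullbackPlay f B i =
      open Classical in
      if IsOpen (f ⁻¹' B i ∩ s i fun j => s.pullbackPlay f B j.1) ∧
          (f ⁻¹' B i ∩ s i fun j => s.pullbackPlay f B j.1).Nonempty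
        then f ⁻¹' B i ∩ s i fun j => s.pullbackPlay f B j.1
        else s i fun j => s.pullbackPlay f B j.1 := by
  rw [pullbackPlay]

theorem pullbackPlay_subset (B : κ.ord.ToType → Set Y) (i : κ.ord.ToType) :
    s.pullbackPlay f B i ⊆ s i fun j => s.pullbackPlay f B j.1 := by
  rw [pullbackPlay_eq]
  split_ifs
  exacts [inter_subset_right, subset_rfl]

theorem pullbackPlay_subset_preimage {B : κ.ord.ToType → Set Y} {i : κ.ord.ToType}
    (hopen : IsOpen (f ⁻¹' B i ∩ s i fun j => s.pullbackPlay f B j.1))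
    (hne : (f ⁻¹' B i ∩ s i fun j => s.pullbackPlay f B j.1).Nonempty) :
    s.pullbackPlay f B i ⊆ f ⁻¹' B i := by
  rw [pullbackPlay_eq, if_pos ⟨hopen, hne⟩]
  exact inter_subset_left

theorem pullbackPlay_congr {B B' : κ.ord.ToType → Set Y} {i : κ.ord.ToType}
    (h : ∀ j ≤ i, B j = B' j) : s.pullbackPlay f B i = s.pullbackPlay f B' i := by
  induction i using WellFoundedLT.induction with
  | _ i ih =>
    have hprev : (fun j : {j // j < i} => s.pullbackPlay f B j.1) =
        fun j => s.pullbackPlay f B' j.1 :=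
      funext fun j => ih j j.2 fun k hk => h k (hk.trans j.2.le)
    rw [pullbackPlay_eq, pullbackPlay_eq, hprev, h i le_rfl]

variable {s}

theorem isOpen_nonempty_pullbackPlay
    (hs : ∀ i (g : {j : κ.ord.ToType // j < i} → Set X),
      (∀ j, IsOpen (g j) ∧ (g j).Nonempty) → IsOpen (s i g) ∧ (s i g).Nonempty)
    (B : κ.ord.ToType → Set Y) (i : κ.ord.ToType) :
    IsOpen (s.pullbackPlay f B i) ∧ (s.pullbackPlay f B i).Nonempty := by
  induction i using WellFoundedLT.induction with
  | _ i ih =>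
    rw [pullbackPlay_eq]
    split_ifs with h
    exacts [h, hs i _ fun j => ih j j.2]

theorem isOpen_nonempty_apply_pullbackPlay
    (hs : ∀ i (g : {j : κ.ord.ToType // j < i} → Set X),
      (∀ j, IsOpen (g j) ∧ (g j).Nonempty) → IsOpen (s i g) ∧ (s i g).Nonempty)
    (B : κ.ord.ToType → Set Y) (i : κ.ord.ToType) :
    IsOpen (s i fun j => s.pullbackPlay f B j.1) ∧
      (s i fun j => s.pullbackPlay f B j.1).Nonempty :=
  hs i _ fun j => isOpen_nonempty_pullbackPlay f hs B j.1

def extendByEmpty {i : κ.ord.ToType} (g : {j : κ.ord.ToType // j < i} → Set Y) :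
    κ.ord.ToType → Set Y :=
  fun k => if h : k < i then g ⟨k, h⟩ else ∅

variable (s) [TopologicalSpace Y]

noncomputable def image : GameStrategy Y κ :=
  fun i g => interior (closure (f '' s i fun j => s.pullbackPlay f (extendByEmpty g) j.1))

theorem image_apply_restrict (B : κ.ord.ToType → Set Y) (i : κ.ord.ToType) :
    s.image f i (fun j => B j.1) =
      interior (closure (f '' s i fun j => s.pullbackPlay f B j.1)) := by
  have hprev : (fun j : {j // j < i} => s.pullbackPlay f (extendByEmpty fun j => B j.1) j.1) =
      fun j => s.pullbackPlay f B j.1 :=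
    funext fun j => pullbackPlay_congr s f fun k hk => dif_pos (hk.trans_lt j.2)
  rw [image, hprev]

end GameStrategy

theorem IsWinningStrategy.image {X Y : Type u} [TopologicalSpace X] [TopologicalSpace Y]
    {κ : Cardinal.{u}} {s : GameStrategy X κ} {f : X → Y} (hs : IsWinningStrategy X κ s)
    (hf : Skeletal f) : IsWinningStrategy Y κ (s.image f) := by
  obtain ⟨hfc, hfs, hf_int⟩ := hf
  have hS := GameStrategy.isOpen_nonempty_apply_pullbackPlay f hs.1
  refine ⟨fun i g _ => ⟨isOpen_interior, hf_int _ (hS _ i).1 (hS _ i).2⟩, fun B hB => ?_⟩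
  have hA : ∀ i, s.pullbackPlay f B i ⊆ f ⁻¹' B i := fun i => by
    obtain ⟨⟨hBo, hBne⟩, hBsub⟩ := hB i
    rw [GameStrategy.image_apply_restrict] at hBsub
    exact s.pullbackPlay_subset_preimage f ((hBo.preimage hfc).inter (hS B i).1)
      (preimage_inter_nonempty_of_subset_closure_image hBo hBne
        (hBsub.trans interior_subset))
  have hdense : Dense (⋃ i, s.pullbackPlay f B i) :=
    hs.2 _ fun i =>
      ⟨GameStrategy.isOpen_nonempty_pullbackPlay f hs.1 B i, s.pullbackPlay_subset f B i⟩
  refine (hfs.denseRange.dense_image hfc hdense).mono ?_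
  rw [image_iUnion]
  exact iUnion_mono fun i => image_subset_iff.2 (hA i)

theorem skeletal_image_favorable_general (X Y : Type u) [TopologicalSpace X] [TopologicalSpace Y]
    (f : X → Y) (hf : Skeletal f) (κ : Cardinal.{u})
    (hX : IsFavorable X κ) : IsFavorable Y κ := by
  obtain ⟨s, hs⟩ := hX
  exact ⟨s.image f, hs.image hf⟩

/-- If `f : X → Y` is a skeletal map and `X` is `κ`-favorable for an
infinite cardinal `κ`, then `Y` is `κ`-favorable. -/
theorem skeletal_image_favorable (X Y : Type u) [TopologicalSpace X] [TopologicalSpace Y]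
    (f : X → Y) (hf : Skeletal f) (κ : Cardinal.{u}) (hκ : ℵ₀ ≤ κ)
    (hX : IsFavorable X κ) : IsFavorable Y κ :=
  skeletal_image_favorable_general X Y f hf κ hX
end

section
/- If Y is a dense subspace of a topological space X and κ is an infinite cardinal, then X is κ-favorable if and only if Y is κ-favorable. -/
open Cardinal Set Topology TopologicalSpace

universe u

/-! Open sets of `Y` are exactly the traces of open sets of `X`, and a set is dense in `Y` iff
its image is dense in `X`. So a winning strategy on `Y` is played in `X` by answering with an
open extension of its answer to the traces of the moves. Conversely, a winning strategy `s` on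
`X` is played in `Y` by keeping a shadow play against `s` in `X`, whose moves are open sets
containing the moves in `Y` and contained in their closures; the shadow union is dense in `X`,
hence so is the union of the moves in `Y`. -/

section OpenExtension

variable {X : Type u} [TopologicalSpace X] {Y : Set X}

/-- The largest open subset of `X` with trace `V` on `Y`, when `V` is open in `Y`. -/
def openExtension (Y : Set X) (V : Set Y) : Set X :=
  (closure ((↑) '' Vᶜ))ᶜ

lemma isOpen_openExtension (V : Set Y) : IsOpen (openExtension Y V) :=
  isClosed_closure.isOpen_compl

lemma preimage_openExtension {V : Set Y} (hV : IsOpen V) :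
    ((↑) : Y → X) ⁻¹' openExtension Y V = V := by
  rw [openExtension, preimage_compl,
    ← IsInducing.subtypeVal.closure_eq_preimage_closure_image, hV.isClosed_compl.closure_eq,
    compl_compl]

lemma image_subset_openExtension {V : Set Y} (hV : IsOpen V) :
    (↑) '' V ⊆ openExtension Y V :=
  image_subset_iff.2 (preimage_openExtension hV).ge

lemma openExtension_subset_closure (hY : Dense Y) {V : Set Y} (hV : IsOpen V) :
    openExtension Y V ⊆ closure ((↑) '' V) := by
  have h := hY.open_subset_closure_inter (isOpen_openExtension V)
  rwa [inter_comm, ← Subtype.image_preimage_coe, preimage_openExtension hV] at h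

lemma Dense.preimage_val_nonempty (hY : Dense Y) {U : Set X} (hU : IsOpen U)
    (hne : U.Nonempty) : (((↑) : Y → X) ⁻¹' U).Nonempty :=
  Subtype.preimage_coe_nonempty.2 (inter_comm U Y ▸ hY.inter_open_nonempty U hU hne)

end OpenExtension

def extendPrefix {ι α : Type*} [LinearOrder ι] {i : ι} (f : {j : ι // j < i} → Set α) :
    ι → Set α :=
  fun j => if h : j < i then f ⟨j, h⟩ else univ

lemma extendPrefix_of_lt {ι α : Type*} [LinearOrder ι] {i j : ι} (f : {j : ι // j < i} → Set α)
    (h : j < i) : extendPrefix f j = f ⟨j, h⟩ :=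
  dif_pos h

namespace GameStrategy

variable {X : Type u} [TopologicalSpace X] {Y : Set X} {κ : Cardinal.{u}}

def lift (s : GameStrategy Y κ) : GameStrategy X κ :=
  fun i f => openExtension Y (s i fun j => (↑) ⁻¹' f j)

open scoped Classical in
/-- The `else` branch is taken only when `F` is not a legal play. -/
noncomputable def shadowPlay (s : GameStrategy X κ) (F : κ.ord.ToType → Set Y) :
    κ.ord.ToType → Set X :=
  wellFounded_lt.fix fun i shadow =>
    if (openExtension Y (F i) ∩ s i fun j => shadow j.1 j.2).Nonempty then
      openExtension Y (F i) ∩ s i fun j => shadow j.1 j.2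
    else s i fun j => shadow j.1 j.2

variable (s : GameStrategy X κ) (F : κ.ord.ToType → Set Y)

open scoped Classical in
lemma shadowPlay_eq (i : κ.ord.ToType) :
    shadowPlay s F i =
      if (openExtension Y (F i) ∩ s i fun j => shadowPlay s F j.1).Nonempty then
        openExtension Y (F i) ∩ s i fun j => shadowPlay s F j.1
      else s i fun j => shadowPlay s F j.1 :=
  wellFounded_lt.fix_eq _ i

lemma shadowPlay_subset (i : κ.ord.ToType) :
    shadowPlay s F i ⊆ s i fun j => shadowPlay s F j.1 := by
  rw [shadowPlay_eq]
  split_ifs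
  exacts [inter_subset_right, subset_rfl]

lemma shadowPlay_congr {G : κ.ord.ToType → Set Y} {i : κ.ord.ToType}
    (h : ∀ j ≤ i, F j = G j) : shadowPlay s F i = shadowPlay s G i := by
  induction i using WellFoundedLT.induction with
  | ind i ih =>
    have h_answer : (fun j : {j // j < i} => shadowPlay s F j.1) = fun j => shadowPlay s G j.1 :=
      funext fun j => ih j.1 j.2 fun k hk => h k (hk.trans j.2.le)
    rw [shadowPlay_eq, shadowPlay_eq, h i le_rfl, h_answer]

lemma shadowPlay_extendPrefix (B : κ.ord.ToType → Set Y) {i : κ.ord.ToType}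
    (j : {j : κ.ord.ToType // j < i}) :
    shadowPlay s (extendPrefix fun j : {j // j < i} => B j) j = shadowPlay s B j :=
  shadowPlay_congr s _ fun _ hk => extendPrefix_of_lt _ (hk.trans_lt j.2)

lemma isOpen_and_nonempty_shadowPlay (hs : IsWinningStrategy X κ s) {i : κ.ord.ToType}
    (hF : ∀ j ≤ i, IsOpen (F j) ∧ (F j).Nonempty) :
    IsOpen (shadowPlay s F i) ∧ (shadowPlay s F i).Nonempty := by
  induction i using WellFoundedLT.induction with
  | ind i ih =>
    have h_answer := hs.1 i _ fun j => ih j.1 j.2 fun k hk => hF k (hk.trans j.2.le)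
    rw [shadowPlay_eq]
    split_ifs with hne
    exacts [⟨(isOpen_openExtension _).inter h_answer.1, hne⟩, h_answer]

variable {s F}

lemma shadowPlay_eq_of_legal {i : κ.ord.ToType} (hF : IsOpen (F i) ∧ (F i).Nonempty)
    (h_legal : F i ⊆ (↑) ⁻¹' s i fun j => shadowPlay s F j.1) :
    shadowPlay s F i = openExtension Y (F i) ∩ s i fun j => shadowPlay s F j.1 := by
  have h_image : (↑) '' F i ⊆ openExtension Y (F i) ∩ s i fun j => shadowPlay s F j.1 :=
    subset_inter (image_subset_openExtension hF.1) (image_subset_iff.2 h_legal)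
  rw [shadowPlay_eq, if_pos ((hF.2.image _).mono h_image)]

def restrict (Y : Set X) (s : GameStrategy X κ) : GameStrategy Y κ :=
  fun i f => (↑) ⁻¹' s i fun j => shadowPlay s (extendPrefix f) j

end GameStrategy

section Transfer

open GameStrategy

variable {X : Type u} [TopologicalSpace X] {Y : Set X} {κ : Cardinal.{u}}

lemma IsWinningStrategy.lift (hY : Dense Y) {s : GameStrategy Y κ}
    (hs : IsWinningStrategy Y κ s) : IsWinningStrategy X κ s.lift := by
  obtain ⟨hs_open, hs_dense⟩ := hs
  have trace_open : ∀ U : Set X, IsOpen U ∧ U.Nonempty →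
      IsOpen ((↑) ⁻¹' U : Set Y) ∧ ((↑) ⁻¹' U : Set Y).Nonempty :=
    fun U hU => ⟨hU.1.preimage continuous_subtype_val, hY.preimage_val_nonempty hU.1 hU.2⟩
  refine ⟨fun i f hf => ?_, fun C hC => ?_⟩
  · obtain ⟨ho, hne⟩ := hs_open i _ fun j => trace_open _ (hf j)
    exact ⟨isOpen_openExtension _, (hne.image _).mono (image_subset_openExtension ho)⟩
  · have hB : ∀ i, (IsOpen ((↑) ⁻¹' C i : Set Y) ∧ ((↑) ⁻¹' C i : Set Y).Nonempty) ∧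
        (↑) ⁻¹' C i ⊆ s i fun j => (↑) ⁻¹' C j := fun i =>
      ⟨trace_open _ (hC i).1, (preimage_mono (hC i).2).trans
        (preimage_openExtension (hs_open i _ fun j => trace_open _ (hC j).1).1).le⟩
    have hdense := hY.isDenseInducing_val.dense_image.2 (hs_dense _ hB)
    exact hdense.mono <| by
      rw [← preimage_iUnion]
      exact image_preimage_subset _ _

lemma IsWinningStrategy.restrict (hY : Dense Y) {s : GameStrategy X κ}
    (hs : IsWinningStrategy X κ s) :
    IsWinningStrategy Y κ (s.restrict Y) := by
  refine ⟨fun i f hf => ?_, fun B hB => ?_⟩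
  · have h_answer := hs.1 i _ fun j => isOpen_and_nonempty_shadowPlay s _ hs fun _ hk =>
      extendPrefix_of_lt f (hk.trans_lt j.2) ▸ hf _
    exact ⟨h_answer.1.preimage continuous_subtype_val,
      hY.preimage_val_nonempty h_answer.1 h_answer.2⟩
  · have h_legal : ∀ i, B i ⊆ (↑) ⁻¹' s i fun j => shadowPlay s B j.1 := fun i => by
      simpa only [GameStrategy.restrict, shadowPlay_extendPrefix] using (hB i).2
    have h_shadow : ∀ i, shadowPlay s B i ⊆ closure ((↑) '' B i) := fun i => by
      rw [shadowPlay_eq_of_legal (hB i).1 (h_legal i)]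
      exact inter_subset_left.trans (openExtension_subset_closure hY (hB i).1.1)
    have h_dense := hs.2 (shadowPlay s B) fun i =>
      ⟨isOpen_and_nonempty_shadowPlay s B hs fun j _ => (hB j).1, shadowPlay_subset s B i⟩
    refine hY.isDenseInducing_val.dense_image.1 (dense_closure.1 (h_dense.mono ?_))
    exact iUnion_subset fun i => (h_shadow i).trans
      (closure_mono (image_mono (subset_iUnion B i)))

end Transfer

theorem favorable_iff_dense_subspace_general (X : Type u) [TopologicalSpace X] (Y : Set X)
    (hY : Dense Y) (κ : Cardinal.{u}) :
    IsFavorable X κ ↔ IsFavorable Y κ :=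
  ⟨fun ⟨s, hs⟩ => ⟨s.restrict Y, hs.restrict hY⟩, fun ⟨s, hs⟩ => ⟨s.lift, hs.lift hY⟩⟩

/-- If `Y` is a dense subspace of `X` and `κ` is an infinite cardinal, then
`X` is `κ`-favorable if and only if `Y` is `κ`-favorable. -/
theorem favorable_iff_dense_subspace (X : Type u) [TopologicalSpace X] (Y : Set X)
    (hY : Dense Y) (κ : Cardinal.{u}) (hκ : ℵ₀ ≤ κ) :
    IsFavorable X κ ↔ IsFavorable Y κ :=
  favorable_iff_dense_subspace_general X Y hY κ
end

section
/- Let κ be an infinite cardinal. If {X_s : s ∈ S} is a family of topological spaces each belonging to the class C_κ, then the Cartesian product Π_{s∈S} X_s belongs to C_κ. -/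
open Cardinal Set Topology TopologicalSpace

universe u

/-!
Each index poset `I_s` has a least element `⊥`, the supremum of the empty chain, and
`κ`-completeness at the empty chain makes `D_s(⊥)` a subsingleton. The product system is indexed
by the `σ ∈ Π_s I_s` that differ from `⊥` in at most `κ` coordinates, with
`X_σ = Π_s D_s(σ_s)`. Then `X_σ` is a product of at most `κ` nontrivial factors, hence has weight
`≤ κ`; products of skeletal maps are skeletal; suprema of chains of size `≤ κ` are computed
coordinatewise, and the limit over such a chain splits as the product of the coordinate limits;
and a thread of the product system is determined by its values at the indices supported on one
coordinate, which identifies its limit with `Π_s lim D_s`.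
-/

theorem Skeletal.piMap {ι : Type u} {X Y : ι → Type u} [∀ i, TopologicalSpace (X i)]
    [∀ i, TopologicalSpace (Y i)] {f : ∀ i, X i → Y i} (hf : ∀ i, Skeletal (f i)) :
    Skeletal (Pi.map f) := by
  refine ⟨continuous_pi fun i => (hf i).1.comp (continuous_apply i),
    Function.Surjective.piMap fun i => (hf i).2.1, fun U hU ⟨x, hx⟩ => ?_⟩
  obtain ⟨F, u, hu, hFU⟩ := isOpen_pi_iff.1 hU x hx
  have hbox : Pi.map f '' (F : Set ι).pi u = (F : Set ι).pi fun i => f i '' u i :=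
    Set.piMap_image_pi (fun i _ => (hf i).2.1) u
  have hsub : (F : Set ι).pi (fun i => interior (closure (f i '' u i))) ⊆
      interior (closure (Pi.map f '' U)) := by
    rw [← interior_pi_set F.finite_toSet, ← closure_pi_set, ← hbox]
    exact interior_mono (closure_mono (Set.image_mono hFU))
  refine (Set.pi_nonempty_iff.2 fun i => ?_).mono hsub
  by_cases hi : i ∈ F
  · obtain ⟨y, hy⟩ := (hf i).2.2 (u i) (hu i hi).1 ⟨x i, (hu i hi).2⟩
    exact ⟨y, fun _ => hy⟩
  · exact ⟨f i (x i), fun h => absurd h hi⟩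

section Weight

variable {X : Type u} {κ : Cardinal.{u}}

theorem exists_isTopologicalBasis_mk_le [t : TopologicalSpace X] (h : tweight X t ≤ κ) :
    ∃ B : Set (Set X), IsTopologicalBasis B ∧ #B ≤ κ := by
  have hne : {c : Cardinal.{u} | ∃ B : Set (Set X), IsTopologicalBasis B ∧ #B = c}.Nonempty :=
    ⟨_, {U | IsOpen U}, isTopologicalBasis_opens, rfl⟩
  obtain ⟨B, hB, hcard⟩ := csInf_mem hne
  exact ⟨B, hB, hcard.le.trans h⟩

theorem tweight_le_of_isTopologicalBasis [t : TopologicalSpace X] {B : Set (Set X)}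
    (hB : IsTopologicalBasis B) (hcard : #B ≤ κ) : tweight X t ≤ κ := by
  refine le_trans (csInf_le' ?_) hcard
  exact ⟨B, hB, rfl⟩

theorem mk_finset_le (hκ : ℵ₀ ≤ κ) (h : #X ≤ κ) : #(Finset X) ≤ κ := by
  classical
  calc #(Finset X) ≤ #(List X) := mk_le_of_surjective List.toFinset_surjective
    _ ≤ max ℵ₀ #X := mk_list_le_max X
    _ ≤ κ := max_le hκ h

theorem tweight_generateFrom_le (hκ : ℵ₀ ≤ κ) {S : Set (Set X)} (hS : #S ≤ κ) :
    tweight X (generateFrom S) ≤ κ := by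
  let := generateFrom S
  refine tweight_le_of_isTopologicalBasis (isTopologicalBasis_of_subbasis rfl) ?_
  have hsub : (fun f => ⋂₀ f) '' {f : Set (Set X) | f.Finite ∧ f ⊆ S} ⊆
      Set.range fun F : Finset S => ⋂₀ (Subtype.val '' (F : Set S)) := by
    rintro _ ⟨f, ⟨hf, hfS⟩, rfl⟩
    refine ⟨(hf.preimage Subtype.val_injective.injOn).toFinset, ?_⟩
    simp [Subtype.image_preimage_coe, Set.inter_eq_right.2 hfS]
  exact (mk_le_mk_of_subset hsub).trans (mk_range_le.trans (mk_finset_le hκ hS))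

theorem tweight_pi_le {ι : Type u} {Y : ι → Type u} [t : ∀ i, TopologicalSpace (Y i)]
    (hκ : ℵ₀ ≤ κ) {T : Set ι} (hT : #T ≤ κ) (hsub : ∀ i ∉ T, Subsingleton (Y i))
    (hw : ∀ i, tweight (Y i) (t i) ≤ κ) : tweight (∀ i, Y i) Pi.topologicalSpace ≤ κ := by
  choose B hB hBcard using fun i => exists_isTopologicalBasis_mk_le (hw i)
  set S : Set (Set (∀ i, Y i)) := ⋃ i : T, (fun V => Function.eval i.1 ⁻¹' V) '' B i
  have hS : #S ≤ κ := by
    refine (mk_iUnion_le _).trans ?_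
    calc #T * ⨆ i : T, #((fun V => Function.eval i.1 ⁻¹' V) '' B i) ≤ κ * κ :=
          mul_le_mul' hT (ciSup_le' fun i => mk_image_le.trans (hBcard i))
      _ = κ := mul_eq_self hκ
  suffices Pi.topologicalSpace = generateFrom S by
    rw [this]
    exact tweight_generateFrom_le hκ hS
  refine le_antisymm (le_generateFrom ?_) (le_iInf fun i => ?_)
  · rintro _ ⟨_, ⟨i, rfl⟩, V, hV, rfl⟩
    exact ((hB i).isOpen hV).preimage (continuous_apply _)
  · rw [← continuous_iff_le_induced]
    by_cases hi : i ∈ T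
    · refine (@IsTopologicalBasis.continuous_iff _ _ (generateFrom S) _ _ (hB i) _).2
        fun V hV => ?_
      exact isOpen_generateFrom_of_mem (Set.mem_iUnion.2 ⟨⟨i, hi⟩, V, hV, rfl⟩)
    · have := hsub i hi
      exact continuous_of_indiscreteTopology

end Weight

abbrev SmallSupportPi (κ : Cardinal.{u}) {S : Type u} (Is : S → Type u) [∀ s, Bot (Is s)] :
    Type u :=
  {σ : ∀ s, Is s // #{s | σ s ≠ ⊥} ≤ κ}

namespace SmallSupportPi

variable {κ : Cardinal.{u}} {S : Type u} {Is : S → Type u}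
  [∀ s, PartialOrder (Is s)] [∀ s, OrderBot (Is s)]

def eval (s : S) (σ : SmallSupportPi κ Is) : Is s := σ.1 s

theorem eval_mono (s : S) : Monotone (eval (κ := κ) (Is := Is) s) := fun _ _ h => h s

theorem isDirected (hκ : ℵ₀ ≤ κ) [∀ s, IsDirected (Is s) (· ≤ ·)] :
    IsDirected (SmallSupportPi κ Is) (· ≤ ·) := by
  classical
  refine ⟨fun σ τ => ?_⟩
  choose z hσz hτz using fun s => directed_of (· ≤ ·) (σ.1 s) (τ.1 s)
  let υ : ∀ s, Is s := fun s => if σ.1 s = ⊥ ∧ τ.1 s = ⊥ then ⊥ else z s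
  have hsupp : {s | υ s ≠ ⊥} ⊆ {s | σ.1 s ≠ ⊥} ∪ {s | τ.1 s ≠ ⊥} := fun s hs => by
    by_contra h
    simp only [Set.mem_union, Set.mem_ofPred_eq, not_or, not_not] at h
    exact hs (if_pos h)
  have hcard : #{s | υ s ≠ ⊥} ≤ κ := calc
    _ ≤ #({s | σ.1 s ≠ ⊥} ∪ {s | τ.1 s ≠ ⊥} : Set S) := mk_le_mk_of_subset hsupp
    _ ≤ #{s | σ.1 s ≠ ⊥} + #{s | τ.1 s ≠ ⊥} := mk_union_le _ _
    _ ≤ κ := add_le_of_le hκ σ.2 τ.2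
  refine ⟨⟨υ, hcard⟩, fun s => show σ.1 s ≤ υ s from ?_, fun s => show τ.1 s ≤ υ s from ?_⟩
    <;> dsimp only [υ] <;> split_ifs with h
  exacts [h.1.le, hσz s, h.2.le, hτz s]

theorem isLUB_of_forall_isLUB_eval {A : Set (SmallSupportPi κ Is)} {σ : SmallSupportPi κ Is}
    (h : ∀ s, IsLUB (eval s '' A) (σ.1 s)) : IsLUB A σ :=
  ⟨fun _ ha s => (h s).1 ⟨_, ha, rfl⟩,
    fun _ hτ s => (h s).2 (Set.forall_mem_image.2 fun _ ha => hτ ha s)⟩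

theorem exists_forall_isLUB_eval (hκ : ℵ₀ ≤ κ) {A : Set (SmallSupportPi κ Is)} (hA : #A ≤ κ)
    (h : ∀ s, ∃ i, IsLUB (eval s '' A) i) :
    ∃ σ : SmallSupportPi κ Is, ∀ s, IsLUB (eval s '' A) (σ.1 s) := by
  choose υ hυ using h
  have hsupp : {s | υ s ≠ ⊥} ⊆ ⋃ σ ∈ A, {s | σ.1 s ≠ ⊥} := fun s hs => by
    by_contra h
    simp only [Set.mem_iUnion, Set.mem_ofPred_eq, not_exists, not_not] at h
    exact hs (le_bot_iff.1 ((hυ s).2 (Set.forall_mem_image.2 fun σ hσ => (h σ hσ).le)))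
  have hcard : #{s | υ s ≠ ⊥} ≤ κ := calc
    _ ≤ #(⋃ σ ∈ A, {s | σ.1 s ≠ ⊥}) := mk_le_mk_of_subset hsupp
    _ ≤ #A * ⨆ σ : A, #{s | σ.1.1 s ≠ ⊥} := mk_biUnion_le _ _
    _ ≤ κ * κ := mul_le_mul' hA (ciSup_le' fun σ => σ.1.2)
    _ = κ := mul_eq_self hκ
  exact ⟨⟨υ, hcard⟩, hυ⟩

theorem isLUB_eval (hκ : ℵ₀ ≤ κ) {A : Set (SmallSupportPi κ Is)} (hA : #A ≤ κ)
    (h : ∀ s, ∃ i, IsLUB (eval s '' A) i) {σ : SmallSupportPi κ Is} (hσ : IsLUB A σ) (s : S) :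
    IsLUB (eval s '' A) (σ.1 s) := by
  obtain ⟨τ, hτ⟩ := exists_forall_isLUB_eval hκ hA h
  rw [hσ.unique (isLUB_of_forall_isLUB_eval hτ)]
  exact hτ s

noncomputable def single (hκ : ℵ₀ ≤ κ) (s : S) (i : Is s) : SmallSupportPi κ Is :=
  haveI := Classical.decEq S
  have hsupp : {t | Function.update ⊥ s i t ≠ ⊥} ⊆ {s} := fun _ ht =>
    by_contra fun h => ht (Function.update_of_ne h _ _)
  ⟨Function.update ⊥ s i, (mk_le_mk_of_subset hsupp).trans (by simpa using one_le_aleph0.trans hκ)⟩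

theorem single_apply_self (hκ : ℵ₀ ≤ κ) (s : S) (i : Is s) : (single hκ s i).1 s = i :=
  @Function.update_self _ _ (Classical.decEq S) ..

theorem single_le (hκ : ℵ₀ ≤ κ) {s : S} {i : Is s} {σ : SmallSupportPi κ Is} (h : i ≤ σ.1 s) :
    single hκ s i ≤ σ := fun t => by
  by_cases ht : t = s
  · subst ht
    exact (single_apply_self hκ t i).trans_le h
  · exact (@Function.update_of_ne _ _ (Classical.decEq S) _ _ ht _ _).trans_le bot_le

end SmallSupportPi

attribute [local instance] InvSys.topo

namespace InvSys

section Topology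

variable {I : Type u} [Preorder I] (D : InvSys I)

theorem continuous_limit_val : Continuous fun x : D.Limit => x.1 := continuous_induced_dom

theorem continuous_chainLimit_val (A : Set I) : Continuous fun x : D.chainLimit A => x.1 :=
  continuous_induced_dom

end Topology

section Complete

variable {I : Type u} [Preorder I] {D : InvSys I} {κ : Cardinal.{u}}

theorem IsComplete.exists_isBot (hD : D.IsComplete κ) : ∃ b : I, IsBot b := by
  obtain ⟨b, hb⟩ := hD.1 ∅ IsChain.empty (by simp)
  exact ⟨b, isLUB_empty_iff.1 hb⟩

theorem IsComplete.subsingleton_obj (hD : D.IsComplete κ) {b : I} (hb : IsBot b) :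
    Subsingleton (D.obj b) := by
  have hlim : Subsingleton (D.chainLimit ∅) :=
    ⟨fun x y => Subtype.ext (funext fun a => absurd a.2 (Set.notMem_empty _))⟩
  exact (hD.2 ∅ IsChain.empty (by simp) b (isLUB_empty_iff.2 hb)).injective.subsingleton

end Complete

open SmallSupportPi

variable {κ : Cardinal.{u}} {S : Type u} {Is : S → Type u}
  [∀ s, PartialOrder (Is s)] [∀ s, OrderBot (Is s)] {Ds : ∀ s, InvSys (Is s)}

variable (Ds) in
def pi (κ : Cardinal.{u}) : InvSys (SmallSupportPi κ Is) where
  obj σ := ∀ s, (Ds s).obj (σ.1 s)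
  topo _ := Pi.topologicalSpace
  map h := Pi.map fun s => (Ds s).map (h s)
  map_id _ x := funext fun s => (Ds s).map_id _ (x s)
  map_comp _ _ x := funext fun s => (Ds s).map_comp _ _ (x s)
  map_cont h := continuous_pi fun s => ((Ds s).map_cont (h s)).comp (continuous_apply s)
  map_surj h := Function.Surjective.piMap fun s => (Ds s).map_surj (h s)

theorem pi_chainLimit_map_eq {A : Set (SmallSupportPi κ Is)} (hA : IsChain (· ≤ ·) A)
    (y : (pi Ds κ).chainLimit A) {a b : SmallSupportPi κ Is} (ha : a ∈ A) (hb : b ∈ A)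
    {s : S} {i : Is s} (hia : i ≤ a.1 s) (hib : i ≤ b.1 s) :
    (Ds s).map hia (y.1 ⟨a, ha⟩ s) = (Ds s).map hib (y.1 ⟨b, hb⟩ s) := by
  rcases hA.total ha hb with hab | hba
  · rw [← congrFun (y.2 ⟨a, ha⟩ ⟨b, hb⟩ hab) s]
    exact (Ds s).map_comp _ _ _
  · rw [← congrFun (y.2 ⟨b, hb⟩ ⟨a, ha⟩ hba) s]
    exact ((Ds s).map_comp _ _ _).symm

noncomputable def piChainLimitHomeomorph {A : Set (SmallSupportPi κ Is)}
    (hA : IsChain (· ≤ ·) A) :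
    (∀ s, (Ds s).chainLimit (eval s '' A)) ≃ₜ (pi Ds κ).chainLimit A where
  toFun w := ⟨fun a s => (w s).1 ⟨a.1.1 s, Set.mem_image_of_mem _ a.2⟩,
    fun a b hab => funext fun s => (w s).2 ⟨a.1.1 s, Set.mem_image_of_mem _ a.2⟩
      ⟨b.1.1 s, Set.mem_image_of_mem _ b.2⟩ (hab s)⟩
  invFun y s := ⟨fun i => (Ds s).map i.2.choose_spec.2.ge (y.1 ⟨_, i.2.choose_spec.1⟩ s),
    fun _ _ hij => ((Ds s).map_comp _ _ _).trans (pi_chainLimit_map_eq hA y _ _ _ _)⟩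
  left_inv w := funext fun s => Subtype.ext <| funext fun i =>
    (w s).2 i ⟨_, Set.mem_image_of_mem _ i.2.choose_spec.1⟩ _
  right_inv y := by
    refine Subtype.ext (funext fun a => funext fun s => ?_)
    exact (pi_chainLimit_map_eq hA y _ a.2 _ le_rfl).trans ((Ds s).map_id _ _)
  continuous_toFun := by
    refine continuous_induced_rng.2 (continuous_pi fun a => continuous_pi fun s => ?_)
    exact ((continuous_apply _).comp (continuous_chainLimit_val _ _)).comp (continuous_apply s)
  continuous_invFun := continuous_pi fun s => continuous_induced_rng.2 <| continuous_pi fun _ =>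
    ((Ds s).map_cont _).comp
      ((continuous_apply s).comp ((continuous_apply _).comp (continuous_chainLimit_val _ _)))

theorem pi_isComplete (hκ : ℵ₀ ≤ κ) (hD : ∀ s, (Ds s).IsComplete κ) :
    (pi Ds κ).IsComplete κ := by
  have hlub (A : Set (SmallSupportPi κ Is)) (hA : IsChain (· ≤ ·) A) (hcard : #A ≤ κ) (s : S) :
      ∃ i, IsLUB (eval s '' A) i :=
    (hD s).1 _ ((eval_mono s).isChain_image hA) (mk_image_le.trans hcard)
  refine ⟨fun A hA hcard => ?_, fun A hA hcard σ hσ => ?_⟩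
  · obtain ⟨σ, hσ⟩ := exists_forall_isLUB_eval hκ hcard (hlub A hA hcard)
    exact ⟨σ, isLUB_of_forall_isLUB_eval hσ⟩
  · have hσs := isLUB_eval hκ hcard (hlub A hA hcard) hσ
    have hhom (s : S) := (hD s).2 _ ((eval_mono s).isChain_image hA) (mk_image_le.trans hcard) _
      (hσs s)
    -- `toChainLimit A σ` is definitionally `piChainLimitHomeomorph hA` after the coordinatewise
    -- canonical maps.
    exact (piChainLimitHomeomorph hA).isHomeomorph.comp (IsHomeomorph.pi_map hhom)

theorem pi_skeletal (hsk : ∀ s (i j : Is s) (h : i ≤ j), Skeletal ((Ds s).map h))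
    {ρ σ : SmallSupportPi κ Is} (h : ρ ≤ σ) : Skeletal ((pi Ds κ).map h) :=
  Skeletal.piMap fun s => hsk s _ _ (h s)

theorem pi_t0Space (hT0 : ∀ s (i : Is s), T0Space ((Ds s).obj i)) (σ : SmallSupportPi κ Is) :
    T0Space ((pi Ds κ).obj σ) :=
  inferInstanceAs (T0Space (∀ s, (Ds s).obj (σ.1 s)))

theorem pi_tweight_le (hκ : ℵ₀ ≤ κ) (hD : ∀ s, (Ds s).IsComplete κ)
    (hw : ∀ s (i : Is s), tweight ((Ds s).obj i) ((Ds s).topo i) ≤ κ) (σ : SmallSupportPi κ Is) :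
    tweight ((pi Ds κ).obj σ) ((pi Ds κ).topo σ) ≤ κ := by
  refine tweight_pi_le hκ σ.2 (fun s hs => ?_) fun s => hw s _
  rw [not_not.1 hs]
  exact (hD s).subsingleton_obj isBot_bot

noncomputable def piLimitHomeomorph (hκ : ℵ₀ ≤ κ) : (pi Ds κ).Limit ≃ₜ ∀ s, (Ds s).Limit where
  toFun x s := ⟨fun i => (Ds s).map (single_apply_self hκ s i).ge (x.1 (single hκ s i) s),
    fun i j hij => ((Ds s).map_comp _ _ _).trans <| ((Ds s).map_comp _ _ _).symm.trans <|
      congrArg ((Ds s).map _)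
        (congrFun (x.2 _ _ (single_le hκ (hij.trans (single_apply_self hκ s j).ge))) s)⟩
  invFun y := ⟨fun σ s => (y s).1 (σ.1 s), fun _ _ h => funext fun s => (y s).2 _ _ (h s)⟩
  left_inv x := Subtype.ext <| funext fun σ => funext fun s =>
    (congrArg ((Ds s).map _) (congrFun (x.2 _ σ (single_le hκ le_rfl)) s).symm).trans <|
      ((Ds s).map_comp _ _ _).trans ((Ds s).map_id _ _)
  right_inv y := funext fun s => Subtype.ext <| funext fun i => (y s).2 _ _ _
  continuous_toFun := by
    refine continuous_pi fun s => continuous_induced_rng.2 (continuous_pi fun i => ?_)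
    exact ((Ds s).map_cont _).comp
      ((continuous_apply s).comp ((continuous_apply _).comp (continuous_limit_val _)))
  continuous_invFun := by
    refine continuous_induced_rng.2 (continuous_pi fun σ => continuous_pi fun s => ?_)
    exact ((continuous_apply _).comp (continuous_limit_val _)).comp (continuous_apply s)

end InvSys

/-- If every member of a family `{X_s : s ∈ S}` of topological spaces
belongs to the class `C_κ`, then so does the product `Π_{s∈S} X_s`. -/
theorem classC_product (κ : Cardinal.{u}) (hκ : ℵ₀ ≤ κ) (S : Type u) (X : S → Type u)
    [∀ s, TopologicalSpace (X s)] (hX : ∀ s, MemClassC (X s) κ) :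
    MemClassC (∀ s, X s) κ := by
  choose I _ hdir D hD hT0 hw hsk e using hX
  choose b hb using fun s => (hD s).exists_isBot
  let : ∀ s, OrderBot (I s) := fun s => { bot := b s, bot_le := hb s }
  exact ⟨SmallSupportPi κ I, inferInstance, SmallSupportPi.isDirected hκ, InvSys.pi D κ,
    InvSys.pi_isComplete hκ hD, InvSys.pi_t0Space hT0, InvSys.pi_tweight_le hκ hD hw,
    fun _ _ => InvSys.pi_skeletal hsk,
    ⟨(Homeomorph.piCongrRight fun s => (e s).some).trans (InvSys.piLimitHomeomorph hκ).symm⟩⟩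
end

section
/- If {X_s : s ∈ S} is a family of ω-favorable (I-favorable) topological spaces, then the product Π_{s∈S} X_s is ω-favorable. -/
open Cardinal Set Topology TopologicalSpace

universe u

/-!
Player I plays the product game by running the winning strategies of all factors at once.
Every move of Player II contains a finite-support open box, and at stage `n` Player I reads off
`n` a finite list of requests "in the coordinate `t`, answer the partial play formed by the
`t`-sides of the boxes of the stages in `l`", coordinates being named by their position in the
support of an earlier box. Each request list is read at arbitrarily late stages, so any finite
family of requests is eventually honoured. To meet a basic open set `∏ V t` with finite
support `F`, induct on `F`: for the new coordinate `t₁`, each answer to a partial play in `t₁`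
can be chosen to meet the sets `V t` of the remaining coordinates, and these answers form a
legal play of the winning strategy in `X t₁`, so one of them meets `V t₁`.
-/

noncomputable def natOrderIsoIioOmega0 : ℕ ≃o Iio Ordinal.omega0.{u} :=
  StrictMono.orderIsoOfSurjective (fun n => ⟨n, Ordinal.natCast_lt_omega0 n⟩)
    (fun _ _ h => Subtype.mk_lt_mk.2 (Nat.cast_lt.2 h))
    (fun b => by
      obtain ⟨n, hn⟩ := Ordinal.lt_omega0.1 b.2
      exact ⟨n, by simp [← hn]⟩)

noncomputable def natOrderIsoToTypeAleph0 : ℕ ≃o (ℵ₀ : Cardinal.{u}).ord.ToType := by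
  rw [ord_aleph0]
  exact natOrderIsoIioOmega0.trans Ordinal.ToType.mk

section ListGame

variable {Y : Type*} [TopologicalSpace Y]

def IsListPlay (τ : List (Set Y) → Set Y) (B : ℕ → Set Y) : Prop :=
  ∀ n, (IsOpen (B n) ∧ (B n).Nonempty) ∧ B n ⊆ τ ((List.range n).map B)

/-- The game of length `ω`, with Player I's move computed from the list of Player II's
previous moves. -/
structure IsWinningListStrategy (τ : List (Set Y) → Set Y) : Prop where
  isOpen_nonempty : ∀ l : List (Set Y), (∀ U ∈ l, IsOpen U ∧ U.Nonempty) →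
    IsOpen (τ l) ∧ (τ l).Nonempty
  dense : ∀ B, IsListPlay τ B → Dense (⋃ n, B n)

theorem IsWinningListStrategy.nonempty {τ : List (Set Y) → Set Y}
    (hτ : IsWinningListStrategy τ) : Nonempty Y :=
  (hτ.isOpen_nonempty [] (by simp)).2.to_subtype.map Subtype.val

/-- Player II's answers `r l`, each played after the partial play `l` made of earlier answers,
form a play against `τ`, so one of them meets `V`. -/
theorem IsWinningListStrategy.exists_inter_nonempty {τ : List (Set Y) → Set Y}
    (hτ : IsWinningListStrategy τ) {α : Type*} (v : α → Set Y)
    (hv : ∀ a, IsOpen (v a) ∧ (v a).Nonempty) (r : List α → α)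
    (hr : ∀ l, v (r l) ⊆ τ (l.map v)) {V : Set Y} (hV : IsOpen V) (hVne : V.Nonempty) :
    ∃ l, (v (r l) ∩ V).Nonempty := by
  let pos : ℕ → List α := fun k => Nat.rec [] (fun _ l => l ++ [r l]) k
  have hpos : ∀ k, pos k = (List.range k).map fun i => r (pos i) := by
    intro k
    induction k with
    | zero => rfl
    | succ k ih =>
      change pos k ++ [r (pos k)] = _
      rw [List.range_succ, List.map_append, ← ih]
      rfl
  have hplay : Dense (⋃ k, v (r (pos k))) := hτ.dense _ fun k => ⟨hv _, by
    calc v (r (pos k)) ⊆ τ ((pos k).map v) := hr _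
      _ = τ ((List.range k).map fun k => v (r (pos k))) := by rw [hpos k, List.map_map]; rfl⟩
  obtain ⟨x, hxV, hx⟩ := hplay.inter_open_nonempty V hV hVne
  obtain ⟨k, hk⟩ := mem_iUnion.1 hx
  exact ⟨pos k, x, hk, hxV⟩

end ListGame

theorem IsFavorable.exists_isWinningListStrategy {Y : Type u} [TopologicalSpace Y]
    (hY : IsFavorable Y ℵ₀) : ∃ τ : List (Set Y) → Set Y, IsWinningListStrategy τ := by
  obtain ⟨σ, hσ⟩ := hY
  let e := natOrderIsoToTypeAleph0.{u}
  let τ : List (Set Y) → Set Y := fun l => σ (e l.length) fun j => l.getD (e.symm j) univ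
  have hτ : ∀ n (l : List (Set Y)), l.length = n →
      τ l = σ (e n) fun j => l.getD (e.symm j) univ := by
    rintro _ l rfl
    rfl
  refine ⟨τ, ⟨fun l hl => hσ.1 _ _ fun j => ?_, fun B hB => ?_⟩⟩
  · have hj : e.symm j < l.length := by simpa using e.symm.strictMono j.2
    rw [List.getD_eq_getElem _ _ hj]
    exact hl _ (List.getElem_mem hj)
  · have hD := hσ.2 (fun i => B (e.symm i)) fun i => ⟨(hB _).1, ?_⟩
    · rwa [e.symm.surjective.iUnion_comp] at hD
    obtain ⟨n, rfl⟩ := e.surjective i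
    rw [e.symm_apply_apply]
    refine (hB n).2.trans (Eq.subset ?_)
    rw [hτ n _ (by simp)]
    congr 1
    funext j
    have hj : e.symm j < n := by simpa using e.symm.strictMono j.2
    simp [hj]

theorem IsWinningListStrategy.isFavorable {Y : Type u} [TopologicalSpace Y]
    {τ : List (Set Y) → Set Y} (hτ : IsWinningListStrategy τ) : IsFavorable Y ℵ₀ := by
  let e := natOrderIsoToTypeAleph0.{u}
  refine ⟨fun i f => τ ((List.range (e.symm i)).map fun m =>
    if hm : e m < i then f ⟨e m, hm⟩ else univ), fun i f hf => hτ.isOpen_nonempty _ ?_,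
    fun B hB => ?_⟩
  · simp only [List.mem_map, List.mem_range, forall_exists_index, and_imp]
    rintro _ m hm rfl
    rw [dif_pos (by simpa using e.strictMono hm)]
    exact hf _
  · have hD := hτ.dense (fun n => B (e n)) fun n => ⟨(hB _).1, ?_⟩
    · rwa [e.surjective.iUnion_comp] at hD
    refine (hB (e n)).2.trans (Eq.subset ?_)
    simp only [e.symm_apply_apply]
    congr 1
    refine List.map_congr_left fun m hm => ?_
    rw [dif_pos (e.strictMono (List.mem_range.1 hm))]

section Product

variable {ι : Type*} {X : ι → Type*} [∀ i, TopologicalSpace (X i)]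

theorem exists_univ_pi_subset {C : Set (∀ i, X i)} (hC : IsOpen C) (hne : C.Nonempty) :
    ∃ d : ∀ i, Set (X i), (∀ i, IsOpen (d i) ∧ (d i).Nonempty) ∧
      {i | d i ≠ Set.univ}.Finite ∧ univ.pi d ⊆ C := by
  classical
  obtain ⟨f, hf⟩ := hne
  obtain ⟨I, u, hu, hsub⟩ := isOpen_pi_iff.1 hC f hf
  refine ⟨fun i => if i ∈ I then u i else Set.univ, fun i => ?_, I.finite_toSet.subset ?_, ?_⟩
  · dsimp only
    split_ifs with hi
    exacts [⟨(hu i hi).1, f i, (hu i hi).2⟩, ⟨isOpen_univ, f i, trivial⟩]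
  · intro i hi
    by_contra h
    exact hi (if_neg h)
  · exact fun x hx => hsub fun i hi => by simpa [show i ∈ I from hi] using hx i trivial

open Classical in
noncomputable def innerBox (C : Set (∀ i, X i)) : ∀ i, Set (X i) :=
  if h : ∃ d : ∀ i, Set (X i), (∀ i, IsOpen (d i) ∧ (d i).Nonempty) ∧
      {i | d i ≠ Set.univ}.Finite ∧ univ.pi d ⊆ C
  then h.choose else fun _ => Set.univ

theorem isOpen_innerBox (C : Set (∀ i, X i)) (i : ι) : IsOpen (innerBox C i) := by
  unfold innerBox
  split_ifs with h
  exacts [(h.choose_spec.1 i).1, isOpen_univ]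

theorem finite_innerBox_ne_univ (C : Set (∀ i, X i)) :
    {i | innerBox C i ≠ Set.univ}.Finite := by
  unfold innerBox
  split_ifs with h
  exacts [h.choose_spec.2.1, by simp]

theorem univ_pi_innerBox_subset {C : Set (∀ i, X i)} (hC : IsOpen C) (hne : C.Nonempty) :
    univ.pi (innerBox C) ⊆ C := by
  have h := exists_univ_pi_subset hC hne
  unfold innerBox
  rw [dif_pos h]
  exact h.choose_spec.2.2

noncomputable def boxSupport (C : Set (∀ i, X i)) : Finset ι :=
  (finite_innerBox_ne_univ C).toFinset

theorem mem_boxSupport {C : Set (∀ i, X i)} {i : ι} :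
    i ∈ boxSupport C ↔ innerBox C i ≠ Set.univ :=
  Set.Finite.mem_toFinset _

noncomputable def decodeCoord (B : ℕ → Set (∀ i, X i)) (q : ℕ × ℕ) : Option ι :=
  (boxSupport (B q.1)).toList[q.2]?

theorem innerBox_eq_univ_of_forall_decodeCoord_ne {B : ℕ → Set (∀ i, X i)} {i : ι}
    (hi : ∀ q, decodeCoord B q ≠ some i) (n : ℕ) : innerBox (B n) i = Set.univ := by
  by_contra h
  obtain ⟨k, hk⟩ := List.mem_iff_getElem?.1 (Finset.mem_toList.2 (mem_boxSupport.2 h))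
  exact hi (n, k) hk

variable (τ : ∀ i, List (Set (X i)) → Set (X i))

def demandSet (B : ℕ → Set (∀ i, X i)) (q : ℕ × ℕ) (l : List ℕ) : Set (∀ i, X i) :=
  {x | ∀ i ∈ decodeCoord B q, x i ∈ τ i (l.map fun m => innerBox (B m) i)}

def requestSet (B : ℕ → Set (∀ i, X i)) (c : List ((ℕ × ℕ) × List ℕ)) : Set (∀ i, X i) :=
  ⋂ p ∈ c, demandSet τ B p.1 p.2

noncomputable def requestAt (n : ℕ) : List ((ℕ × ℕ) × List ℕ) :=
  (Encodable.decode n.unpair.1).getD []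

theorem exists_le_requestAt_eq (c : List ((ℕ × ℕ) × List ℕ)) (N : ℕ) :
    ∃ n, N ≤ n ∧ requestAt n = c :=
  ⟨Nat.pair (Encodable.encode c) N, Nat.right_le_pair _ _, by simp [requestAt]⟩

open Classical in
/-- Requests that are incompatible in some coordinate waste the stage. -/
noncomputable def prodStrategy (L : List (Set (∀ i, X i))) : Set (∀ i, X i) :=
  let R := requestSet τ (fun m => L.getD m Set.univ) (requestAt L.length)
  if R.Nonempty then R else Set.univ

variable {τ} [∀ i, Nonempty (X i)]

theorem innerBox_nonempty (C : Set (∀ i, X i)) (i : ι) : (innerBox C i).Nonempty := by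
  unfold innerBox
  split_ifs with h
  exacts [(h.choose_spec.1 i).2, univ_nonempty]

theorem univ_pi_innerBox_nonempty (C : Set (∀ i, X i)) : (univ.pi (innerBox C)).Nonempty :=
  univ_pi_nonempty_iff.2 (innerBox_nonempty C)

theorem isOpen_requestSet (hτ : ∀ i, IsWinningListStrategy (τ i)) (B : ℕ → Set (∀ i, X i))
    (c : List ((ℕ × ℕ) × List ℕ)) : IsOpen (requestSet τ B c) := by
  refine Set.Finite.isOpen_biInter (List.finite_toSet c) fun p _ => ?_
  unfold demandSet
  cases decodeCoord B p.1 with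
  | none => simp
  | some i =>
    simp only [Option.mem_def, Option.some.injEq, forall_eq']
    refine ((hτ i).isOpen_nonempty _ ?_).1.preimage (continuous_apply i)
    simpa using fun m _ => ⟨isOpen_innerBox _ i, innerBox_nonempty _ i⟩

variable {B : ℕ → Set (∀ i, X i)}

theorem IsListPlay.exists_forall_innerBox_subset (hB : IsListPlay (prodStrategy τ) B)
    (hτ : ∀ i, IsWinningListStrategy (τ i)) {G : Finset ι}
    (hG : ∀ i ∈ G, ∃ q, decodeCoord B q = some i) (g : ι → List ℕ) :
    ∃ n, ∀ i ∈ G, innerBox (B n) i ⊆ τ i ((g i).map fun m => innerBox (B m) i) := by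
  choose! q hq using hG
  set W : ∀ i, Set (X i) := fun i => τ i ((g i).map fun m => innerBox (B m) i)
  -- a stage past every index the requests mention, so that they read the same in `B'` and `B`
  obtain ⟨n, hNn, hn⟩ := exists_le_requestAt_eq (G.toList.map fun i => (q i, g i))
    ((G.sup fun i => ((q i).1 :: g i).sum) + 1)
  have hlt : ∀ i ∈ G, ∀ m ∈ (q i).1 :: g i, m < n := fun i hi m hm =>
    ((List.le_sum_of_mem hm).trans (G.le_sup (f := fun i => ((q i).1 :: g i).sum) hi)).trans_lt
      hNn
  set B' : ℕ → Set (∀ i, X i) := fun m => ((List.range n).map B).getD m Set.univ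
  have hB' : ∀ m < n, B' m = B m := fun m hm => by simp [B', hm]
  have hdemand : ∀ i ∈ G, demandSet τ B' (q i) (g i) = (fun x => x i) ⁻¹' W i := by
    intro i hi
    have hdec : decodeCoord B' (q i) = some i := by
      rw [← hq i hi]
      simp only [decodeCoord, hB' _ (hlt i hi _ List.mem_cons_self)]
    have hmap : (g i).map (fun m => innerBox (B' m) i) = (g i).map fun m => innerBox (B m) i :=
      List.map_congr_left fun m hm => by rw [hB' m (hlt i hi m (List.mem_cons_of_mem _ hm))]
    ext x
    simp [demandSet, hdec, hmap, W]
  have hreq : requestSet τ B' (requestAt n) = (G : Set ι).pi W := by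
    ext x
    simp +contextual [requestSet, hn, hdemand]
  have hne : ((G : Set ι).pi W).Nonempty := pi_nonempty_iff.2 fun i =>
    ((hτ i).isOpen_nonempty _ (by
      simpa using fun m _ => ⟨isOpen_innerBox _ i, innerBox_nonempty _ i⟩)).2.imp fun _ h _ => h
  have hmove : prodStrategy τ ((List.range n).map B) = (G : Set ι).pi W := by
    have hR : requestSet τ B' (requestAt ((List.range n).map B).length) = (G : Set ι).pi W := by
      rw [List.length_map, List.length_range, hreq]
    dsimp only [prodStrategy]
    rw [hR, if_pos hne]
  refine ⟨n, fun i hi => ?_⟩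
  have hsub : univ.pi (innerBox (B n)) ⊆ (fun x => x i) ⁻¹' W i :=
    (univ_pi_innerBox_subset (hB n).1.1 (hB n).1.2).trans
      ((hB n).2.trans (hmove ▸ fun x hx => hx i hi))
  rw [← eval_image_univ_pi (univ_pi_innerBox_nonempty (B n))]
  exact image_subset_iff.2 hsub

theorem IsListPlay.exists_forall_inter_nonempty (hB : IsListPlay (prodStrategy τ) B)
    (hτ : ∀ i, IsWinningListStrategy (τ i)) (V : ∀ i, Set (X i)) {F G : Finset ι}
    (hV : ∀ i ∈ F, IsOpen (V i) ∧ (V i).Nonempty) (hFG : Disjoint F G)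
    (hG : ∀ i ∈ G, ∃ q, decodeCoord B q = some i) (g : ι → List ℕ) :
    ∃ n, (∀ i ∈ F, (innerBox (B n) i ∩ V i).Nonempty) ∧
      ∀ i ∈ G, innerBox (B n) i ⊆ τ i ((g i).map fun m => innerBox (B m) i) := by
  classical
  induction F using Finset.induction_on generalizing G g with
  | empty => simpa using hB.exists_forall_innerBox_subset hτ hG g
  | insert i₁ F hi₁ ih =>
    rw [Finset.forall_mem_insert] at hV
    rw [Finset.disjoint_insert_left] at hFG
    by_cases hcoded : ∃ q, decodeCoord B q = some i₁
    · have hnext (l : List ℕ) := ih hV.2 (Finset.disjoint_insert_right.2 ⟨hi₁, hFG.2⟩)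
        ((Finset.forall_mem_insert _ _ _).2 ⟨hcoded, hG⟩) (Function.update g i₁ l)
      choose r hrF hrG using hnext
      obtain ⟨l, hl⟩ := (hτ i₁).exists_inter_nonempty (fun m => innerBox (B m) i₁)
        (fun m => ⟨isOpen_innerBox _ _, innerBox_nonempty _ _⟩) r
        (fun l => by simpa using hrG l i₁ (Finset.mem_insert_self _ _)) hV.1.1 hV.1.2
      refine ⟨r l, (Finset.forall_mem_insert _ _ _).2 ⟨hl, hrF l⟩, fun i hi => ?_⟩
      have hne : i ≠ i₁ := fun h => hFG.1 (h ▸ hi)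
      simpa [Function.update_of_ne hne] using hrG l i (Finset.mem_insert_of_mem hi)
    · obtain ⟨n, hF, hG'⟩ := ih hV.2 hFG.2 hG g
      refine ⟨n, (Finset.forall_mem_insert _ _ _).2 ⟨?_, hF⟩, hG'⟩
      rw [innerBox_eq_univ_of_forall_decodeCoord_ne (not_exists.1 hcoded), univ_inter]
      exact hV.1.2

theorem isWinningListStrategy_prodStrategy (hτ : ∀ i, IsWinningListStrategy (τ i)) :
    IsWinningListStrategy (prodStrategy τ) where
  isOpen_nonempty L _ := by
    dsimp only [prodStrategy]
    split_ifs with h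
    exacts [⟨isOpen_requestSet hτ _ _, h⟩, ⟨isOpen_univ, univ_nonempty⟩]
  dense B hB := by
    refine dense_iff_inter_open.2 fun O hO hOne => ?_
    obtain ⟨n, hn, -⟩ := hB.exists_forall_inter_nonempty hτ (innerBox O)
      (fun i _ => ⟨isOpen_innerBox O i, innerBox_nonempty O i⟩) (Finset.disjoint_empty_right _)
      (by simp) fun _ => []
    have hmeet : (univ.pi fun i => innerBox (B n) i ∩ innerBox O i).Nonempty :=
      univ_pi_nonempty_iff.2 fun i => by
        by_cases hi : i ∈ boxSupport O
        · exact hn i hi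
        · rw [not_not.1 (mt mem_boxSupport.2 hi), inter_univ]
          exact innerBox_nonempty _ i
    obtain ⟨x, hxB, hxO⟩ := pi_inter_distrib ▸ hmeet
    exact ⟨x, univ_pi_innerBox_subset hO hOne hxO,
      mem_iUnion.2 ⟨n, univ_pi_innerBox_subset (hB n).1.1 (hB n).1.2 hxB⟩⟩

end Product

/-- The product of a family of `ω`-favorable (I-favorable) spaces is
`ω`-favorable. -/
theorem product_omega_favorable (S : Type u) (X : S → Type u)
    [∀ s, TopologicalSpace (X s)] (hX : ∀ s, IsFavorable (X s) ℵ₀) :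
    IsFavorable (∀ s, X s) ℵ₀ := by
  choose τ hτ using fun s => (hX s).exists_isWinningListStrategy
  have := fun s => (hτ s).nonempty
  exact (isWinningListStrategy_prodStrategy hτ).isFavorable
end

section
/- Let X be a topological space, κ an infinite cardinal, and P a family of open subsets of X such that: (1) P is closed under finite unions and finite intersections; (2) there is a κ-winning strategy s for X such that s maps every transfinite sequence of length < κ of members of P to a member of P; (3) P has property (seq). For x, y ∈ X set x ∼_P y iff for every V ∈ P one has x ∈ V ⇔ y ∈ V; let X/P be the set of equivalence classes, q : X → X/P the quotient map, and equip X/P with the topology generated by the images q[V] for V ∈ P. Then X/P is a completely regular space and q : X → X/P is skeletal. -/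
open Cardinal Set Topology TopologicalSpace

universe u

variable (X : Type u) (P : Set (Set X))

/-- The equivalence relation `x ∼_P y` iff for every `V ∈ P`, `x ∈ V ⇔ y ∈ V`. -/
def famSetoid : Setoid X :=
  ⟨fun x y => ∀ V ∈ P, (x ∈ V ↔ y ∈ V),
    ⟨fun _ _ _ => Iff.rfl, fun h V hV => (h V hV).symm,
      fun h₁ h₂ V hV => (h₁ V hV).trans (h₂ V hV)⟩⟩

/-- The quotient `X/P` of `X` by the relation `∼_P`. -/
def FamQuot : Type u := Quotient (famSetoid X P)

/-- The topology on `X/P` generated by the images `q[V]`, `V ∈ P`, of the quotient map. -/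
def famTop : TopologicalSpace (FamQuot X P) :=
  TopologicalSpace.generateFrom
    {W : Set (FamQuot X P) | ∃ V ∈ P, W = Quotient.mk (famSetoid X P) '' V}

/-! Complete regularity: closing `{W}`, for `W ∈ P`, under intersections and under a choice of
(seq)-witnesses yields a countable subfamily `Q ⊆ P` with the same closure properties. The quotient
`X/Q` is regular, since the closed sets `(q[V n])ᶜ` lie between `q[U n]` and `q[U (n + 1)]`, and
second countable, hence metrizable; and `X/P` carries the initial topology of the maps
`X/P → X/Q`.

Skeletality: if the closure of `q[U]` had empty interior, every nonempty `S ∈ P` would contain a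
nonempty `T ∈ P` missing `U`. Answering the winning strategy in this way produces a play whose
union is dense and yet misses the nonempty open set `U`. -/

section Subfamily

variable {X P}

variable (P) in
def HasSeqProperty : Prop :=
  ∀ W ∈ P, ∃ V U : ℕ → Set X, (∀ n, V n ∈ P) ∧ (∀ n, U n ∈ P) ∧
    W = ⋃ n, U n ∧ ∀ n, U n ⊆ (V n)ᶜ ∧ (V n)ᶜ ⊆ U (n + 1)

theorem exists_countable_subfamily (hinter : InfClosed P) (hseq : HasSeqProperty P)
    {W : Set X} (hW : W ∈ P) :
    ∃ Q ⊆ P, Q.Countable ∧ W ∈ Q ∧ InfClosed Q ∧ HasSeqProperty Q := by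
  choose! V U hV hU hWU hUV using hseq
  let step : Set (Set X) → Set (Set X) := fun T =>
    T ∪ image2 (· ∩ ·) T T ∪ ⋃ A ∈ T, (range (V A) ∪ range (U A))
  let F : ℕ → Set (Set X) := fun n => step^[n] {W}
  have hF_succ (n : ℕ) : F (n + 1) = step (F n) := Function.iterate_succ_apply' _ _ _
  have hF_mono : Monotone F :=
    monotone_nat_of_le_succ fun n => (hF_succ n).symm ▸ subset_union_left.trans subset_union_left
  have hF_sub (n : ℕ) : F n ⊆ P := by
    induction n with
    | zero => exact singleton_subset_iff.2 hW
    | succ n ih =>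
      rw [hF_succ]
      rintro A ((hA | ⟨B, hB, C, hC, rfl⟩) | hA)
      · exact ih hA
      · exact hinter (ih hB) (ih hC)
      · simp only [mem_iUnion] at hA
        obtain ⟨B, hB, ⟨k, rfl⟩ | ⟨k, rfl⟩⟩ := hA
        exacts [hV B (ih hB) k, hU B (ih hB) k]
  have hF_count (n : ℕ) : (F n).Countable := by
    induction n with
    | zero => exact countable_singleton W
    | succ n ih =>
      rw [hF_succ]
      exact (ih.union (ih.image2 ih _)).union
        (ih.biUnion fun A _ => (countable_range _).union (countable_range _))
  refine ⟨⋃ n, F n, iUnion_subset hF_sub, countable_iUnion hF_count, mem_iUnion.2 ⟨0, rfl⟩,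
    ?_, ?_⟩
  · intro A hA B hB
    obtain ⟨m, hm⟩ := mem_iUnion.1 hA
    obtain ⟨n, hn⟩ := mem_iUnion.1 hB
    refine mem_iUnion.2 ⟨max m n + 1, (hF_succ _).symm ▸ Or.inl (Or.inr ?_)⟩
    exact ⟨A, hF_mono (le_max_left m n) hm, B, hF_mono (le_max_right m n) hn, rfl⟩
  · intro A hA
    obtain ⟨n, hn⟩ := mem_iUnion.1 hA
    have hAP : A ∈ P := hF_sub n hn
    refine ⟨V A, U A, fun k => mem_iUnion.2 ⟨n + 1, ?_⟩, fun k => mem_iUnion.2 ⟨n + 1, ?_⟩,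
      hWU A hAP, hUV A hAP⟩ <;> rw [hF_succ]
    exacts [Or.inr (mem_biUnion hn (Or.inl ⟨k, rfl⟩)), Or.inr (mem_biUnion hn (Or.inr ⟨k, rfl⟩))]

end Subfamily

instance : TopologicalSpace (FamQuot X P) := famTop X P

section Quotient

variable {X P}

variable (P) in
def famQuotMk : X → FamQuot X P := Quotient.mk (famSetoid X P)

variable (P) in
theorem famQuotMk_surjective : Function.Surjective (famQuotMk P) :=
  Quotient.mk_surjective

theorem famQuotMk_preimage_image {V : Set X} (hV : V ∈ P) :
    famQuotMk P ⁻¹' (famQuotMk P '' V) = V :=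
  Subset.antisymm (fun _ ⟨_, hb, hba⟩ => (Quotient.exact hba V hV).1 hb) (subset_preimage_image _ _)

theorem image_famQuotMk_inter {A B : Set X} (hA : A ∈ P) (hB : B ∈ P) :
    famQuotMk P '' (A ∩ B) = famQuotMk P '' A ∩ famQuotMk P '' B := by
  rw [← image_preimage_eq (famQuotMk P '' A ∩ famQuotMk P '' B) (famQuotMk_surjective P),
    preimage_inter, famQuotMk_preimage_image hA, famQuotMk_preimage_image hB]

theorem image_famQuotMk_compl {V : Set X} (hV : V ∈ P) :
    famQuotMk P '' Vᶜ = (famQuotMk P '' V)ᶜ := by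
  rw [← image_preimage_eq (famQuotMk P '' V)ᶜ (famQuotMk_surjective P), preimage_compl,
    famQuotMk_preimage_image hV]

theorem isOpen_image_famQuotMk {V : Set X} (hV : V ∈ P) : IsOpen (famQuotMk P '' V) :=
  isOpen_generateFrom_of_mem ⟨V, hV, rfl⟩

theorem famQuot_isTopologicalBasis (hinter : InfClosed P) :
    IsTopologicalBasis
      (insert Set.univ {W : Set (FamQuot X P) | ∃ V ∈ P, W = famQuotMk P '' V}) := by
  refine isTopologicalBasis_of_subbasis_of_inter rfl ?_
  rintro _ ⟨A, hA, rfl⟩ _ ⟨B, hB, rfl⟩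
  exact ⟨A ∩ B, hinter hA hB, (image_famQuotMk_inter hA hB).symm⟩

theorem image_famQuotMk_subset_closure (hinter : InfClosed P) {S U : Set X} (hS : S ∈ P)
    (hSU : ∀ T ∈ P, T.Nonempty → T ⊆ S → (T ∩ U).Nonempty) :
    famQuotMk P '' S ⊆ closure (famQuotMk P '' U) := by
  rintro _ ⟨a, haS, rfl⟩
  rw [(famQuot_isTopologicalBasis hinter).mem_closure_iff]
  rintro _ (rfl | ⟨V, hV, rfl⟩) haV
  · obtain ⟨x, -, hxU⟩ := hSU S hS ⟨a, haS⟩ subset_rfl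
    exact ⟨_, trivial, x, hxU, rfl⟩
  · rw [← mem_preimage, famQuotMk_preimage_image hV] at haV
    obtain ⟨x, ⟨hxV, -⟩, hxU⟩ := hSU (V ∩ S) (hinter hV hS) ⟨a, haV, haS⟩ inter_subset_right
    exact ⟨_, ⟨x, hxV, rfl⟩, x, hxU, rfl⟩

end Quotient

section Regular

variable {X P}

theorem famQuot_regularSpace (hinter : InfClosed P) (hseq : HasSeqProperty P) :
    RegularSpace (FamQuot X P) := by
  refine RegularSpace.of_exists_mem_nhds_isClosed_subset fun z O hO => ?_
  obtain ⟨B, hB, hzB, hBO⟩ := (famQuot_isTopologicalBasis hinter).mem_nhds_iff.1 hO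
  obtain rfl | ⟨W, hW, rfl⟩ := hB
  · exact ⟨Set.univ, Filter.univ_mem, isClosed_univ, hBO⟩
  obtain ⟨V, U, hV, hU, rfl, hUV⟩ := hseq W hW
  obtain ⟨n, hzn⟩ := mem_iUnion.1 (image_iUnion ▸ hzB)
  refine ⟨famQuotMk P '' (V n)ᶜ, ?_, ?_, ?_⟩
  · refine Filter.mem_of_superset ((isOpen_image_famQuotMk (hU n)).mem_nhds hzn) ?_
    exact image_mono (hUV n).1
  · rw [image_famQuotMk_compl (hV n)]
    exact (isOpen_image_famQuotMk (hV n)).isClosed_compl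
  · exact (image_mono ((hUV n).2.trans (subset_iUnion U (n + 1)))).trans hBO

theorem famQuot_secondCountableTopology (hcount : P.Countable) (hinter : InfClosed P) :
    SecondCountableTopology (FamQuot X P) := by
  refine (famQuot_isTopologicalBasis hinter).secondCountableTopology (Countable.insert _ ?_)
  convert hcount.image (famQuotMk P '' ·) using 1
  ext W
  simp only [mem_ofPred_eq, mem_image, eq_comm]

theorem famQuot_completelyRegularSpace_of_countable (hcount : P.Countable)
    (hinter : InfClosed P) (hseq : HasSeqProperty P) :
    CompletelyRegularSpace (FamQuot X P) :=
  have := famQuot_regularSpace hinter hseq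
  have := famQuot_secondCountableTopology hcount hinter
  inferInstance

end Regular

section CompletelyRegular

variable {X P}

def famQuotMap {Q : Set (Set X)} (hQP : Q ⊆ P) : FamQuot X P → FamQuot X Q :=
  Quotient.map id fun _ _ hab V hV => hab V (hQP hV)

theorem famQuotMap_comp_famQuotMk {Q : Set (Set X)} (hQP : Q ⊆ P) :
    famQuotMap hQP ∘ famQuotMk P = famQuotMk Q :=
  rfl

theorem famQuotMap_preimage_image {Q : Set (Set X)} (hQP : Q ⊆ P) {V : Set X} (hV : V ∈ Q) :
    famQuotMap hQP ⁻¹' (famQuotMk Q '' V) = famQuotMk P '' V := by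
  refine (famQuotMk_surjective P).preimage_injective ?_
  rw [← preimage_comp, famQuotMap_comp_famQuotMk, famQuotMk_preimage_image hV,
    famQuotMk_preimage_image (hQP hV)]

theorem continuous_famQuotMap {Q : Set (Set X)} (hQP : Q ⊆ P) : Continuous (famQuotMap hQP) := by
  refine continuous_generateFrom_iff.2 ?_
  rintro _ ⟨V, hV, rfl⟩
  show IsOpen (famQuotMap hQP ⁻¹' (famQuotMk Q '' V))
  rw [famQuotMap_preimage_image hQP hV]
  exact isOpen_image_famQuotMk (hQP hV)

variable (P) in
def CountableSeqSubfamily : Type u :=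
  {Q : Set (Set X) // Q ⊆ P ∧ Q.Countable ∧ InfClosed Q ∧ HasSeqProperty Q}

theorem famTop_eq_iInf_induced (hinter : InfClosed P) (hseq : HasSeqProperty P) :
    famTop X P = ⨅ Q : CountableSeqSubfamily P, (famTop X Q.1).induced (famQuotMap Q.2.1) := by
  refine le_antisymm (le_iInf fun Q => continuous_iff_le_induced.1 (continuous_famQuotMap Q.2.1))
    (le_generateFrom ?_)
  rintro _ ⟨W, hW, rfl⟩
  obtain ⟨Q, hQP, hQ, hWQ, hQinter, hQseq⟩ := exists_countable_subfamily hinter hseq hW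
  refine iInf_le (fun Q : CountableSeqSubfamily P => (famTop X Q.1).induced (famQuotMap Q.2.1))
    ⟨Q, hQP, hQ, hQinter, hQseq⟩ _ ?_
  exact ⟨_, isOpen_image_famQuotMk hWQ, famQuotMap_preimage_image hQP hWQ⟩

theorem famQuot_completelyRegularSpace (hinter : InfClosed P) (hseq : HasSeqProperty P) :
    CompletelyRegularSpace (FamQuot X P) := by
  have h := completelyRegularSpace_iInf
    (t := fun Q : CountableSeqSubfamily P => (famTop X Q.1).induced (famQuotMap Q.2.1)) fun Q =>
    completelyRegularSpace_induced
      (famQuot_completelyRegularSpace_of_countable Q.2.2.1 Q.2.2.2.1 Q.2.2.2.2) (famQuotMap Q.2.1)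
  rw [← famTop_eq_iInf_induced hinter hseq] at h
  exact h

end CompletelyRegular

section Skeletal

variable {X P} [TopologicalSpace X]

theorem exists_mem_forall_subset_inter_nonempty {κ : Cardinal.{u}} {s : GameStrategy X κ}
    (hs : IsWinningStrategy X κ s)
    (hsP : ∀ (i : κ.ord.ToType) (g : {j : κ.ord.ToType // j < i} → Set X),
      (∀ j, g j ∈ P) → s i g ∈ P)
    (hopen : ∀ V ∈ P, IsOpen V) {U : Set X} (hU : IsOpen U) (hUne : U.Nonempty) :
    ∃ S ∈ P, S.Nonempty ∧ ∀ T ∈ P, T.Nonempty → T ⊆ S → (T ∩ U).Nonempty := by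
  by_contra! hcon
  choose! answer hanswer using hcon
  let B : κ.ord.ToType → Set X := WellFoundedLT.fix fun i IH => answer (s i fun j => IH j.1 j.2)
  have hB (i : κ.ord.ToType) : B i = answer (s i fun j => B j.1) := WellFoundedLT.fix_eq _ i
  have hmove (i : κ.ord.ToType) : s i (fun j => B j.1) ∈ P ∧ (s i fun j => B j.1).Nonempty := by
    induction i using WellFoundedLT.induction with
    | ind i ih =>
      have hBj (j : {j // j < i}) : B j.1 ∈ P ∧ (B j.1).Nonempty :=
        hB j ▸ (hanswer _ (ih j j.2).1 (ih j j.2).2).imp_right And.left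
      exact ⟨hsP i _ fun j => (hBj j).1, (hs.1 i _ fun j => ⟨hopen _ (hBj j).1, (hBj j).2⟩).2⟩
  have hplay (i : κ.ord.ToType) :
      B i ∈ P ∧ (B i).Nonempty ∧ B i ⊆ s i (fun j => B j.1) ∧ B i ∩ U = ∅ :=
    hB i ▸ hanswer _ (hmove i).1 (hmove i).2
  have hdense : Dense (⋃ i, B i) :=
    hs.2 B fun i => ⟨⟨hopen _ (hplay i).1, (hplay i).2.1⟩, (hplay i).2.2.1⟩
  obtain ⟨x, hxU, hxB⟩ := hdense.inter_open_nonempty U hU hUne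
  obtain ⟨i, hxi⟩ := mem_iUnion.1 hxB
  exact (hplay i).2.2.2.subset ⟨hxi, hxU⟩

theorem continuous_famQuotMk (hopen : ∀ V ∈ P, IsOpen V) : Continuous (famQuotMk P) := by
  refine continuous_generateFrom_iff.2 ?_
  rintro _ ⟨V, hV, rfl⟩
  show IsOpen (famQuotMk P ⁻¹' (famQuotMk P '' V))
  rw [famQuotMk_preimage_image hV]
  exact hopen V hV

theorem skeletal_famQuotMk {κ : Cardinal.{u}} {s : GameStrategy X κ}
    (hs : IsWinningStrategy X κ s)
    (hsP : ∀ (i : κ.ord.ToType) (g : {j : κ.ord.ToType // j < i} → Set X),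
      (∀ j, g j ∈ P) → s i g ∈ P)
    (hopen : ∀ V ∈ P, IsOpen V) (hinter : InfClosed P) : Skeletal (famQuotMk P) := by
  refine ⟨continuous_famQuotMk hopen, famQuotMk_surjective P, fun U hU hUne => ?_⟩
  obtain ⟨S, hS, hSne, hSU⟩ := exists_mem_forall_subset_inter_nonempty hs hsP hopen hU hUne
  exact (hSne.image _).mono <|
    interior_maximal (image_famQuotMk_subset_closure hinter hS hSU) (isOpen_image_famQuotMk hS)

end Skeletal

theorem famQuot_completelyRegular_and_skeletal [TopologicalSpace X]
    (κ : Cardinal.{u})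
    (hopen : ∀ V ∈ P, IsOpen V)
    (hinter : ∀ U ∈ P, ∀ V ∈ P, U ∩ V ∈ P)
    (hstrat : ∃ s : GameStrategy X κ, IsWinningStrategy X κ s ∧
      ∀ (i : κ.ord.ToType) (g : {j : κ.ord.ToType // j < i} → Set X),
        (∀ j, g j ∈ P) → s i g ∈ P)
    (hseq : ∀ W ∈ P, ∃ V U : ℕ → Set X, (∀ n, V n ∈ P) ∧ (∀ n, U n ∈ P) ∧
      W = ⋃ n, U n ∧ ∀ n, U n ⊆ (V n)ᶜ ∧ (V n)ᶜ ⊆ U (n + 1)) :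
    @CompletelyRegularSpace (FamQuot X P) (famTop X P) ∧
      @Skeletal X (FamQuot X P) _ (famTop X P) (Quotient.mk (famSetoid X P)) := by
  have hinter' : InfClosed P := fun U hU V hV => hinter U hU V hV
  obtain ⟨s, hs, hsP⟩ := hstrat
  exact ⟨famQuot_completelyRegularSpace hinter' hseq, skeletal_famQuotMk hs hsP hopen hinter'⟩
end

section
/- (Kurepa) If {X_s : s ∈ S} is a family of topological spaces and κ is an infinite cardinal with c(X_s) ≤ κ for each s ∈ S, then c(Π_{s∈S} X_s) ≤ 2^κ. -/
open Cardinal Set Topology TopologicalSpace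

universe u

/-!
If the product had more than `2 ^ κ` pairwise disjoint nonempty open sets, shrink each to a
basic box. Any two of the boxes are separated on a coordinate common to their finite supports;
colouring a pair by the positions of such a coordinate in the two supports uses countably many
colours, so the Erdős–Rado theorem `(2 ^ κ)⁺ → (κ⁺)²_κ` yields `κ⁺` boxes all separated on one
coordinate `s`, hence `κ⁺` pairwise disjoint nonempty open sets in `X s`.

Erdős–Rado: take `A` of size `2 ^ κ` such that every colour pattern over a subset `T ⊆ A` of
size `κ` that is realized outside `T` is realized in `A \ T`. From a point `a ∉ A` this gives a
sequence of length `κ⁺` in `A` whose every element sees all later ones in the colour it sees `a`;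
the pigeonhole principle on those colours finishes.
-/

open Function Order

section ErdosRado

variable {α ι : Type u} {κ : Cardinal.{u}}

theorem exists_forall_lt_of_mk_le_succ (hκ : ℵ₀ ≤ κ) {s : Set (succ κ).ord.ToType}
    (hs : #s ≤ κ) : ∃ i, ∀ j ∈ s, j < i :=
  not_isCofinal_iff.mp fun hcof => ((cof_le hcof).trans hs).not_gt <| by
    rw [Ordinal.cof_toType, (isRegular_succ hκ).cof_ord]
    exact lt_succ κ

theorem mk_Iio_le_of_succ (i : (succ κ).ord.ToType) : #(Iio i) ≤ κ :=
  lt_succ_iff.mp (by simpa using mk_Iio_lt i)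

noncomputable def closureStage (κ : Cardinal.{u}) (F : Set α → Set α) :
    (succ κ).ord.ToType → Set α :=
  wellFounded_lt.fix fun i stage =>
    ⋃ T : {T : Set α // T ⊆ ⋃ (j) (h : j < i), stage j h ∧ #T ≤ κ}, F T

theorem closureStage_eq (F : Set α → Set α) (i : (succ κ).ord.ToType) :
    closureStage κ F i =
      ⋃ T : {T : Set α // T ⊆ ⋃ j < i, closureStage κ F j ∧ #T ≤ κ}, F T :=
  wellFounded_lt.fix_eq _ i

theorem mk_closureStage_le (hκ : ℵ₀ ≤ κ) {μ : Cardinal.{u}} (hκμ : κ < μ) (hμ : μ ^ κ = μ)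
    {F : Set α → Set α} (hF : ∀ T : Set α, #T ≤ κ → #(F T) ≤ μ) (i : (succ κ).ord.ToType) :
    #(closureStage κ F i) ≤ μ := by
  have hμ₀ : ℵ₀ ≤ μ := hκ.trans hκμ.le
  induction i using WellFoundedLT.induction with
  | ind i ih =>
  have hprev : #(⋃ j ∈ Iio i, closureStage κ F j) ≤ μ := calc
    _ ≤ #(Iio i) * ⨆ j : Iio i, #(closureStage κ F j) := mk_biUnion_le _ _
    _ ≤ μ * μ := mul_le_mul' ((mk_Iio_le_of_succ i).trans hκμ.le)
        (ciSup_le' fun j => ih j j.2)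
    _ = μ := mul_eq_self hμ₀
  rw [closureStage_eq]
  calc _ ≤ #{T : Set α // T ⊆ ⋃ j ∈ Iio i, closureStage κ F j ∧ #T ≤ κ} *
        ⨆ T : {T : Set α // T ⊆ ⋃ j ∈ Iio i, closureStage κ F j ∧ #T ≤ κ}, #(F T) :=
        mk_iUnion_le _
    _ ≤ μ * μ := by
        refine mul_le_mul' ((mk_bounded_subset_le _ κ).trans ?_) (ciSup_le' fun T => hF T T.2.2)
        exact (power_le_power_right (max_le hprev hμ₀)).trans hμ.le
    _ = μ := mul_eq_self hμ₀

theorem exists_closed_under_small_subsets (hκ : ℵ₀ ≤ κ) {μ : Cardinal.{u}} (hκμ : κ < μ)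
    (hμ : μ ^ κ = μ) (F : Set α → Set α) (hF : ∀ T : Set α, #T ≤ κ → #(F T) ≤ μ) :
    ∃ A : Set α, #A ≤ μ ∧ ∀ T ⊆ A, #T ≤ κ → F T ⊆ A := by
  refine ⟨⋃ i, closureStage κ F i, ?_, fun T hTA hT => ?_⟩
  · calc _ ≤ #(succ κ).ord.ToType * ⨆ i, #(closureStage κ F i) := mk_iUnion_le _
      _ ≤ μ * μ := by
          refine mul_le_mul' ?_ (ciSup_le' (mk_closureStage_le hκ hκμ hμ hF))
          rw [mk_ord_toType]
          exact succ_le_of_lt hκμ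
      _ = μ := mul_eq_self (hκ.trans hκμ.le)
  · choose stage hstage using fun t : T => mem_iUnion.mp (hTA t.2)
    obtain ⟨i, hi⟩ := exists_forall_lt_of_mk_le_succ hκ (mk_range_le.trans hT)
    have hTi : T ⊆ ⋃ j < i, closureStage κ F j := fun t ht =>
      mem_biUnion (hi _ (mem_range_self ⟨t, ht⟩)) (hstage ⟨t, ht⟩)
    refine subset_iUnion_of_subset i ?_
    rw [closureStage_eq]
    exact subset_iUnion_of_subset ⟨T, hTi, hT⟩ subset_rfl

theorem exists_mk_le_realizing (hκ : ℵ₀ ≤ κ) (hι : #ι ≤ κ) (g : α → α → ι) :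
    ∃ A : Set α, #A ≤ 2 ^ κ ∧ ∀ T ⊆ A, #T ≤ κ → ∀ a ∉ T,
      ∃ b ∈ A, b ∉ T ∧ ∀ t ∈ T, g t b = g t a := by
  let F : Set α → Set α := fun T =>
    range fun p : {p : T → ι // ∃ b ∉ T, ∀ t : T, g t b = p t} => p.2.choose
  have hF : ∀ T : Set α, #T ≤ κ → #(F T) ≤ 2 ^ κ := fun T hT => calc
    #(F T) ≤ #(T → ι) := mk_range_le.trans (mk_subtype_le _)
    _ = #ι ^ #T := (power_def _ _).symm
    _ ≤ κ ^ κ := (power_le_power_right hι).trans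
        (power_le_power_left (aleph0_pos.trans_le hκ).ne' hT)
    _ = 2 ^ κ := power_self_eq hκ
  obtain ⟨A, hA, hAF⟩ := exists_closed_under_small_subsets hκ (cantor κ)
    (by rw [← power_mul, mul_eq_self hκ]) F hF
  refine ⟨A, hA, fun T hTA hT a ha => ?_⟩
  have hreal : ∃ b ∉ T, ∀ t : T, g t b = g t a := ⟨a, ha, fun _ => rfl⟩
  obtain ⟨hbT, hbg⟩ := hreal.choose_spec
  exact ⟨hreal.choose, hAF T hTA hT ⟨⟨_, hreal⟩, rfl⟩, hbT, fun t ht => hbg ⟨t, ht⟩⟩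

theorem exists_seq_of_forall_exists {β : Type u} [Preorder β] [WellFoundedLT β]
    [Nonempty α] {S : Set α} {P : Set α → α → Prop}
    (h : ∀ ξ : β, ∀ X ⊆ S, #X ≤ #(Iio ξ) → ∃ b ∈ S, P X b) :
    ∃ f : β → α, ∀ ξ, f ξ ∈ S ∧ P (f '' Iio ξ) (f ξ) := by
  let f : β → α := wellFounded_lt.fix fun ξ f =>
    Classical.epsilon fun b => b ∈ S ∧ P (range fun η : Iio ξ => f η η.2) b
  have hf : ∀ ξ, f ξ = Classical.epsilon fun b => b ∈ S ∧ P (f '' Iio ξ) b := fun ξ => by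
    rw [image_eq_range]
    exact wellFounded_lt.fix_eq _ ξ
  refine ⟨f, fun ξ => ?_⟩
  induction ξ using WellFoundedLT.induction with
  | ind ξ ih =>
  rw [hf]
  exact Classical.epsilon_spec (h ξ _ (image_subset_iff.2 fun η hη => (ih η hη).1) mk_image_le)

theorem exists_injective_endHomogeneous (g : α → α → ι) {A : Set α}
    (hA : ∀ T ⊆ A, #T ≤ κ → ∀ a ∉ T, ∃ b ∈ A, b ∉ T ∧ ∀ t ∈ T, g t b = g t a)
    {a : α} (ha : a ∉ A) :
    ∃ f : (succ κ).ord.ToType → α, Injective f ∧ ∀ η ξ, η < ξ → g (f η) (f ξ) = g (f η) a := by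
  have : Nonempty α := ⟨a⟩
  obtain ⟨f, hf⟩ := exists_seq_of_forall_exists (S := A)
    (P := fun X b => b ∉ X ∧ ∀ x ∈ X, g x b = g x a) fun ξ X hXA hX =>
      hA X hXA (hX.trans (mk_Iio_le_of_succ ξ)) a fun haX => ha (hXA haX)
  refine ⟨f, Injective.of_lt_imp_ne fun η ξ h hfe => (hf ξ).2.1 ⟨η, h, hfe⟩,
    fun η ξ h => (hf ξ).2.2 _ (mem_image_of_mem f h)⟩

theorem erdos_rado (hκ : ℵ₀ ≤ κ) (hα : 2 ^ κ < #α) (hι : #ι ≤ κ) (g : α → α → ι)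
    (hg : ∀ x y, g x y = g y x) :
    ∃ c : ι, ∃ H : Set α, κ < #H ∧ H.Pairwise fun x y => g x y = c := by
  obtain ⟨A, hAcard, hA⟩ := exists_mk_le_realizing hκ hι g
  obtain ⟨a, ha⟩ : ∃ a, a ∉ A := by
    by_contra! hall
    rw [eq_univ_of_forall hall, mk_univ] at hAcard
    exact hAcard.not_gt hα
  obtain ⟨f, hf, hfg⟩ := exists_injective_endHomogeneous g hA ha
  obtain ⟨c, hc⟩ := infinite_pigeonhole_card (fun η => g (f η) a) (succ κ)
    (mk_ord_toType _).ge (hκ.trans (le_succ κ))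
    (by rw [(isRegular_succ hκ).cof_ord]; exact hι.trans_lt (lt_succ κ))
  refine ⟨c, f '' ((fun η => g (f η) a) ⁻¹' {c}), ?_, ?_⟩
  · rw [mk_image_eq hf]
    exact (lt_succ κ).trans_le hc
  · rintro _ ⟨η, hη, rfl⟩ _ ⟨ξ, hξ, rfl⟩ hne
    rcases lt_or_gt_of_ne (ne_of_apply_ne f hne) with h | h
    · rw [hfg η ξ h]
      exact hη
    · rw [hg, hfg ξ η h]
      exact hξ

end ErdosRado

theorem lt_mk_diff_singleton {α : Type u} {κ : Cardinal.{u}} (hκ : ℵ₀ ≤ κ) {s : Set α}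
    (hs : κ < #s) (a : α) : κ < #(s \ {a} : Set α) := by
  by_contra! h
  refine hs.not_ge ?_
  calc #s ≤ #(insert a (s \ {a}) : Set α) := mk_le_mk_of_subset (subset_insert_sdiff_singleton _ _)
    _ ≤ κ + 1 := mk_insert_le.trans (add_le_add_left h 1)
    _ = κ := add_one_eq hκ

theorem exists_sep_eq_of_sep_mem_countable {α S : Type u} [LinearOrder α] [WellFoundedLT α]
    {κ : Cardinal.{u}} (hκ : ℵ₀ ≤ κ) (hα : 2 ^ κ < #α) {F : α → Set S}
    (hF : ∀ i, (F i).Countable) (sep : α → α → S)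
    (hsep : ∀ i j, i < j → sep i j ∈ F i ∧ sep i j ∈ F j) :
    ∃ s, ∃ H : Set α, κ < #H ∧ (∀ i ∈ H, s ∈ F i) ∧ ∀ i ∈ H, ∀ j ∈ H, i < j → sep i j = s := by
  choose e he using fun i => Set.countable_iff_exists_injOn.mp (hF i)
  let color : α → α → ULift.{u} (ℕ × ℕ) := fun i j => ⟨(e i (sep i j), e j (sep i j))⟩
  obtain ⟨⟨m, n⟩, H, hH, hcolor⟩ := erdos_rado hκ hα (mk_le_aleph0.trans hκ)
    (fun i j => color (min i j) (max i j)) fun i j => by rw [min_comm, max_comm]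
  have hmn : ∀ i ∈ H, ∀ j ∈ H, i < j → e i (sep i j) = m ∧ e j (sep i j) = n :=
    fun i hi j hj hij => by
      simpa only [min_eq_left hij.le, max_eq_right hij.le, color, ULift.up.injEq,
        Prod.mk.injEq] using hcolor hi hj hij.ne
  -- With `i₀` the least element of `H`, injectivity of `e i₀` and of `e k` gives
  -- `sep j k = sep i₀ k = sep i₀ j₀` for all `j < k` in `H \ {i₀}`.
  obtain ⟨i₀, hi₀, hmin⟩ := wellFounded_lt.has_min H
    (mk_set_ne_zero_iff.mp (zero_le.trans_lt hH).ne')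
  have habove : ∀ k ∈ H \ {i₀}, i₀ < k := fun k hk =>
    lt_of_le_of_ne (not_lt.mp (hmin k hk.1)) (Ne.symm hk.2)
  have hH' := lt_mk_diff_singleton hκ hH i₀
  obtain ⟨j₀, hj₀⟩ := mk_set_ne_zero_iff.mp (zero_le.trans_lt hH').ne'
  have hfirst : ∀ k ∈ H \ {i₀}, sep i₀ k = sep i₀ j₀ := fun k hk =>
    he i₀ (hsep _ _ (habove k hk)).1 (hsep _ _ (habove j₀ hj₀)).1
      ((hmn i₀ hi₀ k hk.1 (habove k hk)).1.trans (hmn i₀ hi₀ j₀ hj₀.1 (habove j₀ hj₀)).1.symm)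
  refine ⟨sep i₀ j₀, H \ {i₀}, hH', fun k hk => hfirst k hk ▸ (hsep _ _ (habove k hk)).2,
    fun j hj k hk hjk => ?_⟩
  rw [← hfirst k hk]
  exact he k (hsep _ _ hjk).2 (hsep _ _ (habove k hk)).2
    ((hmn j hj.1 k hk.1 hjk).2.trans (hmn i₀ hi₀ k hk.1 (habove k hk)).2.symm)

theorem exists_pairwise_of_forall_ne_exists_mem {α S : Type u} {κ : Cardinal.{u}}
    (hκ : ℵ₀ ≤ κ) (hα : 2 ^ κ < #α) {F : α → Set S} (hF : ∀ i, (F i).Countable)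
    (R : S → α → α → Prop) (hR : ∀ s i j, R s i j → R s j i)
    (hsep : ∀ i j, i ≠ j → ∃ s ∈ F i, s ∈ F j ∧ R s i j) :
    ∃ s, ∃ H : Set α, κ < #H ∧ (∀ i ∈ H, s ∈ F i) ∧ H.Pairwise (R s) := by
  obtain ⟨_, _⟩ := exists_wellFoundedLT α
  have : Nontrivial α := one_lt_iff_nontrivial.mp <|
    (one_lt_aleph0.trans_le hκ).trans ((cantor κ).trans hα)
  have : Nonempty S := by
    obtain ⟨i, j, hij⟩ := exists_pair_ne α
    exact ⟨(hsep i j hij).choose⟩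
  choose! sep hsepi hsepj hsepR using hsep
  obtain ⟨s, H, hH, hsF, hsep_eq⟩ := exists_sep_eq_of_sep_mem_countable hκ hα hF sep
    fun i j h => ⟨hsepi i j h.ne, hsepj i j h.ne⟩
  refine ⟨s, H, hH, hsF, fun j hj k hk hjk => ?_⟩
  rcases hjk.lt_or_gt with h | h
  · rw [← hsep_eq j hj k hk h]
    exact hsepR _ _ h.ne
  · rw [← hsep_eq k hk j hj h]
    exact hR _ _ _ (hsepR _ _ h.ne)

theorem Set.exists_mem_disjoint_of_disjoint_pi {ι : Type*} {X : ι → Type*} {I J : Set ι}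
    {V W : ∀ i, Set (X i)} (hV : (I.pi V).Nonempty) (hW : (J.pi W).Nonempty)
    (h : Disjoint (I.pi V) (J.pi W)) : ∃ i ∈ I, i ∈ J ∧ Disjoint (V i) (W i) := by
  obtain ⟨x, hx⟩ := hV
  obtain ⟨y, hy⟩ := hW
  by_contra! hmeet
  have hz : ∀ i, ∃ z, (i ∈ I → z ∈ V i) ∧ (i ∈ J → z ∈ W i) := fun i => by
    by_cases hI : i ∈ I
    · by_cases hJ : i ∈ J
      · obtain ⟨z, hz⟩ := not_disjoint_iff.mp (hmeet i hI hJ)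
        exact ⟨z, fun _ => hz.1, fun _ => hz.2⟩
      · exact ⟨x i, fun _ => hx i hI, fun h => absurd h hJ⟩
    · exact ⟨y i, fun h => absurd h hI, hy i⟩
  choose z hz using hz
  exact disjoint_left.mp h (fun i hi => (hz i).1 hi) (fun i hi => (hz i).2 hi)

section Cellularity

variable {Y : Type u} [TopologicalSpace Y]

theorem le_cellularity {U : Set (Set Y)} (hU : ∀ V ∈ U, IsOpen V ∧ V.Nonempty)
    (hd : U.PairwiseDisjoint id) : #U ≤ cellularity Y := by
  unfold cellularity
  exact le_ciSup (f := fun U : {U : Set (Set Y) // _} => #U.1) bddAbove_of_small ⟨U, hU, hd⟩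

theorem mk_le_cellularity {ι : Type u} {H : Set ι} {V : ι → Set Y}
    (hV : ∀ i ∈ H, IsOpen (V i) ∧ (V i).Nonempty) (hd : H.Pairwise (Disjoint on V)) :
    #H ≤ cellularity Y := by
  have hinj : InjOn V H := fun i hi j hj hij => by_contra fun hne =>
    (hV i hi).2.ne_empty ((hd hi hj hne).eq_bot_of_le hij.le)
  rw [← mk_image_eq_of_injOn _ _ hinj]
  exact le_cellularity (forall_mem_image.2 hV) (hinj.pairwiseDisjoint_image.2 hd)

end Cellularity

/-- Kurepa: If `c(X_s) ≤ κ` for every `s ∈ S`, then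
`c(Π_{s∈S} X_s) ≤ 2^κ`. -/
theorem kurepa_cellularity_product (S : Type u) (X : S → Type u)
    [∀ s, TopologicalSpace (X s)] (κ : Cardinal.{u}) (hκ : ℵ₀ ≤ κ)
    (h : ∀ s, cellularity (X s) ≤ κ) :
    cellularity (∀ s, X s) ≤ 2 ^ κ := by
  refine ciSup_le' fun ⟨U, hU, hUd⟩ => ?_
  by_contra! hlarge
  have hbox : ∀ W : U, ∃ (I : Finset S) (V : ∀ s, Set (X s)),
      (∀ s ∈ I, IsOpen (V s) ∧ (V s).Nonempty) ∧ ((I : Set S).pi V).Nonempty ∧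
        (I : Set S).pi V ⊆ W := by
    rintro ⟨W, hW⟩
    obtain ⟨y, hy⟩ := (hU W hW).2
    obtain ⟨I, V, hV, hVW⟩ := isOpen_pi_iff.mp (hU W hW).1 y hy
    exact ⟨I, V, fun s hs => ⟨(hV s hs).1, _, (hV s hs).2⟩, ⟨y, fun s hs => (hV s hs).2⟩, hVW⟩
  choose I V hV hVne hVW using hbox
  have hsep : ∀ W W' : U, W ≠ W' → ∃ s ∈ I W, s ∈ I W' ∧ Disjoint (V W s) (V W' s) :=
    fun W W' hne => exists_mem_disjoint_of_disjoint_pi (hVne W) (hVne W')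
      ((hUd W.2 W'.2 (Subtype.coe_injective.ne hne)).mono (hVW W) (hVW W'))
  obtain ⟨s, H, hH, hsI, hdisj⟩ := exists_pairwise_of_forall_ne_exists_mem hκ hlarge
    (fun W => (I W).countable_toSet) (fun s W W' => Disjoint (V W s) (V W' s))
    (fun _ _ _ hd => hd.symm) hsep
  exact (h s).not_gt (hH.trans_le (mk_le_cellularity (fun W hW => hV W s (hsI W hW)) hdisj))
end
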